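/- arXiv:1812.11376 — 3 statements merged into one kernel-verified Lean document; each statement's English description precedes it below -/
import Mathlib

section
/- Let R be a discrete valuation ring with maximal ideal 𝔪 that is complete with respect to the 𝔪-adic topology. Let F(X₁,X₂) ∈ R[X₁,X₂] and let u = (u₁,u₂) ∈ R² satisfy F(u₁,u₂) = 0 and (∂F/∂X₁)(u₁,u₂) ∉ 𝔪. Then for every integer m ≥ 1 there exists a polynomial f_m(Y) ∈ R[Y] such that for every (x₁,x₂) ∈ R² with F(x₁,x₂) = 0, x₁ ≡ u₁ (mod 𝔪) and x₂ ≡ u₂ (mod 𝔪), one has x₁ ≡ f_m(x₂) (mod 𝔪^m). -/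
lemma my_eval_aeval {R : Type*} [CommRing R] (v : Fin 2 → Polynomial R)
    (F : MvPolynomial (Fin 2) R) (t : R) :
    Polynomial.eval t (MvPolynomial.aeval v F) =
      MvPolynomial.eval (fun i => Polynomial.eval t (v i)) F := by
  have h1 : Polynomial.eval t (MvPolynomial.aeval v F)
      = Polynomial.evalRingHom t
          (MvPolynomial.eval₂ (algebraMap R (Polynomial R)) v F) := by
    rw [MvPolynomial.aeval_def]; rfl
  rw [h1, MvPolynomial.eval₂_comp_left, ← MvPolynomial.eval₂_id]
  congr 1
  ext x
  simp

lemma my_deriv_aeval {R : Type*} [CommRing R] (c : R) (F : MvPolynomial (Fin 2) R) :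
    Polynomial.derivative (MvPolynomial.aeval ![Polynomial.X, Polynomial.C c] F) =
      MvPolynomial.aeval ![Polynomial.X, Polynomial.C c] (MvPolynomial.pderiv 0 F) := by
  induction F using MvPolynomial.induction_on with
  | C a => simp
  | add p q hp hq => simp [hp, hq]
  | mul_X p i hp =>
    fin_cases i <;>
      simp [MvPolynomial.pderiv_mul, MvPolynomial.pderiv_X, hp,
        Polynomial.derivative_mul] <;> ring

lemma my_eval_congr {R : Type*} [CommRing R] (I : Ideal R) (G : MvPolynomial (Fin 2) R)
    {a b a' b' : R} (ha : a - a' ∈ I) (hb : b - b' ∈ I) :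
    MvPolynomial.eval ![a, b] G - MvPolynomial.eval ![a', b'] G ∈ I := by
  have key : ∀ v : Fin 2 → R, Ideal.Quotient.mk I (MvPolynomial.eval v G)
      = MvPolynomial.eval₂ (Ideal.Quotient.mk I)
          (fun i => Ideal.Quotient.mk I (v i)) G := by
    intro v
    rw [← MvPolynomial.eval₂_id, MvPolynomial.eval₂_comp_left]
    rfl
  apply Ideal.Quotient.eq.mp
  rw [key, key]
  have hv : (fun i => Ideal.Quotient.mk I (![a, b] i))
      = (fun i => Ideal.Quotient.mk I (![a', b'] i)) := by
    funext i
    fin_cases i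
    · simpa using Ideal.Quotient.eq.mpr ha
    · simpa using Ideal.Quotient.eq.mpr hb
  rw [hv]

/-- **Hensel-type lemma**: let `R` be a complete discrete valuation ring with maximal ideal
`𝔪`, `F ∈ R[X₁,X₂]` and `(u₁,u₂) ∈ R²` with `F(u₁,u₂) = 0` and `(∂F/∂X₁)(u₁,u₂) ∉ 𝔪`.
Then for every `m ≥ 1` there is a polynomial `f_m ∈ R[Y]` such that every zero `(x₁,x₂)` of
`F` with `x₁ ≡ u₁` and `x₂ ≡ u₂ (mod 𝔪)` satisfies `x₁ ≡ f_m(x₂) (mod 𝔪^m)`. -/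
theorem hensel_param (R : Type*) [CommRing R] [IsDomain R] [IsDiscreteValuationRing R]
    [IsAdicComplete (IsLocalRing.maximalIdeal R) R]
    (F : MvPolynomial (Fin 2) R) (u₁ u₂ : R)
    (hzero : MvPolynomial.eval ![u₁, u₂] F = 0)
    (hder : MvPolynomial.eval ![u₁, u₂] (MvPolynomial.pderiv 0 F) ∉
      IsLocalRing.maximalIdeal R)
    (m : ℕ) (hm : 1 ≤ m) :
    ∃ f : Polynomial R, ∀ x₁ x₂ : R,
      MvPolynomial.eval ![x₁, x₂] F = 0 →
      x₁ - u₁ ∈ IsLocalRing.maximalIdeal R →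
      x₂ - u₂ ∈ IsLocalRing.maximalIdeal R →
      x₁ - Polynomial.eval x₂ f ∈ (IsLocalRing.maximalIdeal R) ^ m := by
  set 𝔪 := IsLocalRing.maximalIdeal R with h𝔪
  set d := MvPolynomial.eval ![u₁, u₂] (MvPolynomial.pderiv 0 F) with hd
  obtain ⟨dv, hdv⟩ := (IsLocalRing.notMem_maximalIdeal.mp hder).exists_right_inv
  induction m, hm using Nat.le_induction with
  | base =>
    refine ⟨Polynomial.C u₁, fun x₁ x₂ _ h1 _ => ?_⟩
    simpa using h1
  | succ m hm ih =>
    obtain ⟨f, hf⟩ := ih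
    -- Newton iteration step
    set G : Polynomial R :=
      MvPolynomial.aeval ![f, Polynomial.X] (MvPolynomial.pderiv 0 F) with hG
    set s : Polynomial R := 1 - Polynomial.C dv * G with hs
    set h : Polynomial R :=
      Polynomial.C dv * (∑ k ∈ Finset.range (m + 1), s ^ k) with hh
    set Ff : Polynomial R := MvPolynomial.aeval ![f, Polynomial.X] F with hFf
    refine ⟨f - h * Ff, fun x₁ x₂ hF h1 h2 => ?_⟩
    have he : x₁ - f.eval x₂ ∈ 𝔪 ^ m := hf x₁ x₂ hF h1 h2
    set a := f.eval x₂ with ha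
    set e := x₁ - a with heq
    -- values at x₂
    have hGv : G.eval x₂ = MvPolynomial.eval ![a, x₂] (MvPolynomial.pderiv 0 F) := by
      rw [hG, my_eval_aeval]
      have : (fun i => Polynomial.eval x₂ (![f, Polynomial.X] i)) = ![a, x₂] := by
        funext i; fin_cases i <;> simp [ha]
      rw [this]
    have hFfv : Ff.eval x₂ = MvPolynomial.eval ![a, x₂] F := by
      rw [hFf, my_eval_aeval]
      have : (fun i => Polynomial.eval x₂ (![f, Polynomial.X] i)) = ![a, x₂] := by
        funext i; fin_cases i <;> simp [ha]
      rw [this]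
    set gv := MvPolynomial.eval ![a, x₂] (MvPolynomial.pderiv 0 F) with hgv
    set Fv := MvPolynomial.eval ![a, x₂] F with hFv
    -- congruences mod 𝔪
    have hea : a - u₁ ∈ 𝔪 := by
      have h1' : x₁ - a ∈ 𝔪 := by
        have : 𝔪 ^ m ≤ 𝔪 ^ 1 := Ideal.pow_le_pow_right hm
        simpa using this he
      have := 𝔪.sub_mem h1 h1'
      simpa [sub_sub_sub_cancel_left] using this
    have hsv : gv - d ∈ 𝔪 := my_eval_congr 𝔪 _ hea h2
    -- Taylor expansion
    set P : Polynomial R :=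
      MvPolynomial.aeval ![Polynomial.X, Polynomial.C x₂] F with hP
    have hPa : P.eval a = Fv := by
      rw [hP, my_eval_aeval, hFv]
      have : (fun i => Polynomial.eval a (![Polynomial.X, Polynomial.C x₂] i)) = ![a, x₂] := by
        funext i; fin_cases i <;> simp
      rw [this]
    have hPx : P.eval x₁ = 0 := by
      rw [hP, my_eval_aeval, ← hF]
      have : (fun i => Polynomial.eval x₁ (![Polynomial.X, Polynomial.C x₂] i)) = ![x₁, x₂] := by
        funext i; fin_cases i <;> simp
      rw [this]
    have hPd : P.derivative.eval a = gv := by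
      rw [hP, my_deriv_aeval, my_eval_aeval, hgv]
      have : (fun i => Polynomial.eval a (![Polynomial.X, Polynomial.C x₂] i)) = ![a, x₂] := by
        funext i; fin_cases i <;> simp
      rw [this]
    obtain ⟨k, hk⟩ := P.binomExpansion a e
    rw [show a + e = x₁ by rw [heq]; ring, hPx, hPa, hPd] at hk
    -- hk : 0 = Fv + gv * e + k * e ^ 2
    -- geometric series
    set sv := s.eval x₂ with hsve
    have hsv' : sv ∈ 𝔪 := by
      have : sv = dv * (d - gv) := by
        rw [hsve, hs]
        simp only [Polynomial.eval_sub, Polynomial.eval_one, Polynomial.eval_mul,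
          Polynomial.eval_C, hGv, ← hgv]
        have : dv * d = 1 := by rw [mul_comm]; exact hdv
        ring_nf
        rw [mul_comm dv d, hdv]
        ring
      rw [this]
      exact Ideal.mul_mem_left _ _ (𝔪.neg_mem_iff.mp (by simpa [neg_sub] using hsv))
    have hhv : h.eval x₂ * gv = 1 - sv ^ (m + 1) := by
      have hgeom : (∑ i ∈ Finset.range (m + 1), sv ^ i) * (sv - 1)
          = sv ^ (m + 1) - 1 := geom_sum_mul sv (m + 1)
      have h1sv : 1 - sv = dv * gv := by
        rw [hsve, hs]
        simp [hGv, ← hgv]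
      calc h.eval x₂ * gv
          = (∑ i ∈ Finset.range (m + 1), sv ^ i) * (dv * gv) := by
            rw [hh]; push_cast [Polynomial.eval_mul, Polynomial.eval_C,
              Polynomial.eval_finset_sum, Polynomial.eval_pow, ← hsve]; ring
        _ = (∑ i ∈ Finset.range (m + 1), sv ^ i) * (1 - sv) := by rw [h1sv]
        _ = -((∑ i ∈ Finset.range (m + 1), sv ^ i) * (sv - 1)) := by ring
        _ = 1 - sv ^ (m + 1) := by rw [hgeom]; ring
    -- final computation
    have hfinal : x₁ - Polynomial.eval x₂ (f - h * Ff)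
        = e * sv ^ (m + 1) - h.eval x₂ * k * e ^ 2 := by
      have hFveq : Fv = -(gv * e + k * e ^ 2) := by linear_combination -hk
      simp only [Polynomial.eval_sub, Polynomial.eval_mul, ← ha, hFfv, ← hFv]
      rw [hFveq]
      have : x₁ = a + e := by rw [heq]; ring
      rw [this]
      have expand : a + e - (a - h.eval x₂ * -(gv * e + k * e ^ 2))
          = e * (1 - h.eval x₂ * gv) - h.eval x₂ * k * e ^ 2 := by ring
      rw [expand, hhv]
      ring
    rw [hfinal]
    refine Ideal.sub_mem _ ?_ ?_
    · -- e * sv ^ (m+1) ∈ 𝔪 ^ (m+1)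
      exact Ideal.mul_mem_left _ _ (Ideal.pow_mem_pow hsv' (m + 1))
    · -- h.eval x₂ * k * e ^ 2 ∈ 𝔪 ^ (m+1): e^2 ∈ 𝔪^(2m) ⊆ 𝔪^(m+1)
      apply Ideal.mul_mem_left
      have h2m : 𝔪 ^ (2 * m) ≤ 𝔪 ^ (m + 1) := Ideal.pow_le_pow_right (by omega)
      apply h2m
      have : e ^ 2 ∈ (𝔪 ^ m) * (𝔪 ^ m) := by
        rw [sq]; exact Ideal.mul_mem_mul he he
      simpa [← pow_add, two_mul] using this
end

section
/- Let 𝔭 be a nonzero prime ideal of O_K of absolute norm p. Let F(X₁,X₂) ∈ O_K[X₁,X₂] be irreducible in K̄[X₁,X₂] of total degree d ≥ 2, choose nonnegative integers m₁, m₂ with m₁ + m₂ = d such that the coefficient of X₁^{m₁}X₂^{m₂} in F is nonzero, fix an integer D ≥ d, and set ℰ = {(e₁,e₂) ∈ ℕ² : e₁ ≤ m₁, e₂ ≤ m₂, e₁ + e₂ ≤ D}, E = #ℰ and E' = Σ_{(e₁,e₂)∈ℰ} (e₁ + e₂). Let B ≥ 1 and let S ⊆ O_K² be a set of points (x₁,x₂)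 such that F(x₁,x₂) = 0, H(x₁) ≤ B, H(x₂) ≤ B, (∂F/∂X₁)(x₁,x₂) ∉ 𝔭, and any two points of S are congruent coordinatewise modulo 𝔭. If p^{E(E−1)/2} > (E^E · B^{E'})^{ρ}, then: (1) the matrix whose rows are indexed by the points (x₁,x₂) of S and whose columns are the monomial values x₁^{e₁}x₂^{e₂} for (e₁,e₂) ∈ ℰ has rank at most E − 1; and (2) there exists a nonzero polynomial G ∈ O_K[X₁,X₂], all of whose monomials lie in ℰ (in particular deg G ≤ D), which vanishes at every point of S and has no common non-unit factor with F in K̄[X₁,X₂]. -/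
open NumberField

/-- factorial bound: n! ≤ (n+1)^(n-1) -/
private lemma pp1_factorial_le (n : ℕ) : Nat.factorial n ≤ (n + 1) ^ (n - 1) := by
  induction n with
  | zero => simp [Nat.factorial]
  | succ n ih =>
    rcases Nat.eq_zero_or_pos n with rfl | hn
    · simp [Nat.factorial]
    · calc (n + 1).factorial = (n + 1) * n.factorial := rfl
        _ ≤ (n + 1) * (n + 1) ^ (n - 1) := Nat.mul_le_mul_left _ ih
        _ = (n + 1) ^ (n - 1 + 1) := by rw [pow_succ, mul_comm]
        _ = (n + 1) ^ n := by congr 1; omega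
        _ ≤ (n + 2) ^ n := Nat.pow_le_pow_left (by omega) n
        _ = (n + 1 + 1) ^ (n + 1 - 1) := by norm_num

/-- sum of a finset of naturals of card k is at least k(k-1)/2 (doubled form) -/
private lemma pp1_sum_card (s : Finset ℕ) : s.card * (s.card - 1) ≤ 2 * ∑ x ∈ s, x := by
  induction s using Finset.strongInduction with
  | _ s ih =>
    rcases s.eq_empty_or_nonempty with rfl | hne
    · simp
    · set M := s.max' hne with hM
      have hMmem : M ∈ s := s.max'_mem hne
      have hsub : s ⊆ Finset.range (M + 1) := by
        intro x hx
        simp only [Finset.mem_range]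
        exact Nat.lt_succ_of_le (s.le_max' x hx)
      have hcardle : s.card ≤ M + 1 := by
        simpa using Finset.card_le_card hsub
      have herase : s.erase M ⊂ s := Finset.erase_ssubset hMmem
      have ihe := ih _ herase
      have hcarde : (s.erase M).card = s.card - 1 := Finset.card_erase_of_mem hMmem
      have hsum : M + ∑ x ∈ s.erase M, x = ∑ x ∈ s, x := Finset.add_sum_erase s id hMmem
      rw [hcarde] at ihe
      rcases Nat.lt_or_ge s.card 2 with h2 | h2
      · have : s.card - 1 = 0 := by omega
        rw [this, Nat.mul_zero]
        exact Nat.zero_le _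
      · obtain ⟨t, ht⟩ : ∃ t, s.card = t + 2 := ⟨s.card - 2, by omega⟩
        have key : s.card * (s.card - 1) = (s.card - 1) * (s.card - 1 - 1) + 2 * (s.card - 1) := by
          rw [ht]
          show (t + 2) * (t + 1) = (t + 1) * t + 2 * (t + 1)
          ring
        rw [key]
        have h1 : 2 * (s.card - 1) ≤ 2 * M := by omega
        calc (s.card - 1) * (s.card - 1 - 1) + 2 * (s.card - 1)
            ≤ 2 * (∑ x ∈ s.erase M, x) + 2 * M := Nat.add_le_add ihe h1
          _ = 2 * (M + ∑ x ∈ s.erase M, x) := by ring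
          _ = 2 * ∑ x ∈ s, x := by rw [hsum]

/-- an injective ℕ-valued function on a fintype of cardinality k has sum ≥ k(k-1)/2 -/
private lemma pp1_sum_inj {ι : Type*} [Fintype ι] [DecidableEq ι] (r : ι → ℕ)
    (hr : Function.Injective r) :
    Fintype.card ι * (Fintype.card ι - 1) / 2 ≤ ∑ i, r i := by
  have himg : (Finset.univ.image r).card = Fintype.card ι := by
    rw [Finset.card_image_of_injective _ hr, Finset.card_univ]
  have hsum : ∑ x ∈ Finset.univ.image r, x = ∑ i, r i := by
    rw [Finset.sum_image (fun a _ b _ h => hr h)]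
  have := pp1_sum_card (Finset.univ.image r)
  rw [himg, hsum] at this
  omega

/-- Newton iteration for nilpotent-valued polynomials. -/
private lemma pp1_newton {R : Type*} [CommRing R] (f : Polynomial R) :
    ∀ (n : ℕ) (a : R), (f.eval a) ^ (2 ^ n) = 0 → IsUnit (f.derivative.eval a) →
      ∃ b : R, f.eval b = 0 ∧ f.eval a ∣ b - a := by
  intro n
  induction n with
  | zero =>
    intro a ha _
    exact ⟨a, by simpa using ha, by simp⟩
  | succ n ih =>
    intro a ha hu
    set u : R := ↑hu.unit⁻¹ with hu_def
    have huu : f.derivative.eval a * u = 1 := by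
      rw [hu_def]
      exact IsUnit.mul_val_inv hu
    set y : R := -(u * f.eval a) with hy
    obtain ⟨k, hk⟩ := f.binomExpansion a y
    have hb0 : f.eval (a + y) = k * u ^ 2 * f.eval a ^ 2 := by
      rw [hk, hy]
      linear_combination (norm := ring) (-(f.eval a)) * huu
    have hfanil : IsNilpotent (f.eval a) := ⟨2 ^ (n + 1), ha⟩
    have hynil : IsNilpotent y := by
      rw [hy]
      exact ((Commute.all _ _).isNilpotent_mul_left hfanil).neg
    have hb0pow : (f.eval (a + y)) ^ (2 ^ n) = 0 := by
      rw [hb0, mul_pow, ← pow_mul]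
      have h2 : 2 * 2 ^ n = 2 ^ (n + 1) := by rw [pow_succ]; ring
      rw [h2, ha, mul_zero]
    have hderiv : IsUnit (f.derivative.eval (a + y)) := by
      obtain ⟨k', hk'⟩ := f.derivative.binomExpansion a y
      have h' : f.derivative.eval (a + y) = f.derivative.eval a +
          y * (f.derivative.derivative.eval a + k' * y) := by rw [hk']; ring
      rw [h']
      exact IsNilpotent.isUnit_add_left_of_commute
        ((Commute.all _ _).isNilpotent_mul_right hynil) hu (Commute.all _ _)
    obtain ⟨b, hb, hdvd⟩ := ih (a + y) hb0pow hderiv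
    refine ⟨b, hb, ?_⟩
    have h1 : f.eval a ∣ b - (a + y) :=
      dvd_trans ⟨k * u ^ 2 * f.eval a, by rw [hb0]; ring⟩ hdvd
    have h2 : f.eval a ∣ y := by rw [hy]; exact (dvd_mul_left _ _).neg_right
    have : b - a = (b - (a + y)) + y := by ring
    rw [this]
    exact dvd_add h1 h2

/-- Finsupp product over `Fin 2`. -/
private lemma pp1_finsupp_prod {M : Type*} [CommMonoid M] (u : Fin 2 →₀ ℕ) (v : Fin 2 → M) :
    (u.prod fun i e => v i ^ e) = v 0 ^ u 0 * v 1 ^ u 1 := by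
  rw [Finsupp.prod_fintype _ _ (fun i => pow_zero (v i))]
  exact Fin.prod_univ_two _

/-- substitute `X` for the first variable and a constant for the second -/
private noncomputable def pp1_toPolyX {R S : Type*} [CommRing R] [CommRing S]
    (φ : R →+* S) (s : S) (F : MvPolynomial (Fin 2) R) : Polynomial S :=
  MvPolynomial.eval₂ (Polynomial.C.comp φ) ![Polynomial.X, Polynomial.C s] F

/-- substitute a constant for the first variable and `X` for the second -/
private noncomputable def pp1_toPolyY {R S : Type*} [CommRing R] [CommRing S]
    (φ : R →+* S) (r : S) (F : MvPolynomial (Fin 2) R) : Polynomial S :=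
  MvPolynomial.eval₂ (Polynomial.C.comp φ) ![Polynomial.C r, Polynomial.X] F

private lemma pp1_toPolyX_eval {R S : Type*} [CommRing R] [CommRing S]
    (φ : R →+* S) (s y : S) (F : MvPolynomial (Fin 2) R) :
    (pp1_toPolyX φ s F).eval y = MvPolynomial.eval₂ φ ![y, s] F := by
  have h := MvPolynomial.eval₂_comp_left (Polynomial.evalRingHom y)
    (Polynomial.C.comp φ) ![Polynomial.X, Polynomial.C s] F
  simp only [Polynomial.coe_evalRingHom] at h
  rw [pp1_toPolyX]
  rw [h]
  congr 1
  · ext r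
    simp
  · funext i
    fin_cases i <;> simp

private lemma pp1_toPolyY_eval {R S : Type*} [CommRing R] [CommRing S]
    (φ : R →+* S) (r y : S) (F : MvPolynomial (Fin 2) R) :
    (pp1_toPolyY φ r F).eval y = MvPolynomial.eval₂ φ ![r, y] F := by
  have h := MvPolynomial.eval₂_comp_left (Polynomial.evalRingHom y)
    (Polynomial.C.comp φ) ![Polynomial.C r, Polynomial.X] F
  simp only [Polynomial.coe_evalRingHom] at h
  rw [pp1_toPolyY]
  rw [h]
  congr 1
  · ext z
    simp
  · funext i
    fin_cases i <;> simp

private lemma pp1_toPolyX_derivative {R S : Type*} [CommRing R] [CommRing S]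
    (φ : R →+* S) (s : S) (F : MvPolynomial (Fin 2) R) :
    (pp1_toPolyX φ s F).derivative = pp1_toPolyX φ s (MvPolynomial.pderiv 0 F) := by
  induction F using MvPolynomial.induction_on' with
  | add p q hp hq =>
    simp only [pp1_toPolyX, map_add, MvPolynomial.eval₂_add, Polynomial.derivative_add] at *
    rw [hp, hq]
  | monomial u c =>
    rw [pp1_toPolyX, pp1_toPolyX, MvPolynomial.pderiv_monomial,
      MvPolynomial.eval₂_monomial, MvPolynomial.eval₂_monomial,
      pp1_finsupp_prod, pp1_finsupp_prod]
    simp only [Matrix.cons_val_zero, Matrix.cons_val_one, Matrix.head_cons, RingHom.coe_comp,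
      Function.comp_apply]
    have h0 : ((u - Finsupp.single 0 1 : Fin 2 →₀ ℕ)) (0 : Fin 2) = u 0 - 1 := by
      rw [Finsupp.tsub_apply, Finsupp.single_eq_same]
    have h1 : ((u - Finsupp.single 0 1 : Fin 2 →₀ ℕ)) (1 : Fin 2) = u 1 := by
      rw [Finsupp.tsub_apply, Finsupp.single_eq_of_ne (by decide)]
      rfl
    rw [h0, h1]
    have hrw : Polynomial.C (φ c) * (Polynomial.X ^ u 0 * Polynomial.C s ^ u 1)
        = Polynomial.C (φ c * s ^ u 1) * Polynomial.X ^ u 0 := by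
      rw [← Polynomial.C_pow, map_mul]; ring
    rw [hrw, Polynomial.derivative_C_mul, Polynomial.derivative_X_pow]
    rw [map_mul φ, map_natCast φ, ← Polynomial.C_pow]
    rw [map_mul Polynomial.C, map_mul Polynomial.C, Polynomial.C_eq_natCast]
    ring

/-- determinant of a matrix whose rows are polynomial values: multilinear expansion -/
private lemma pp1_detV {A : Type*} [CommRing A] {ι : Type*} [Fintype ι] [DecidableEq ι]
    (Ψ : ι → Polynomial A) (τ : ι → A)
    (hz : ∀ r : ι → ℕ, Function.Injective r → ∏ i, τ i ^ r i = 0) :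
    (Matrix.of fun i j => (Ψ j).eval (τ i)).det = 0 := by
  classical
  set M : ℕ := (Finset.univ.sup fun j : ι => (Ψ j).natDegree) + 1 with hM
  set v : ℕ → ι → A := fun n j => (Ψ j).coeff n with hv
  have hrow : (Matrix.of fun i j => (Ψ j).eval (τ i))
      = fun i => ∑ n ∈ Finset.range M, (τ i ^ n) • v n := by
    funext i j
    rw [Finset.sum_apply]
    simp only [Pi.smul_apply, smul_eq_mul, hv, Matrix.of_apply]
    rw [Polynomial.eval_eq_sum_range'
      (lt_of_le_of_lt (Finset.le_sup (f := fun j : ι => (Ψ j).natDegree) (Finset.mem_univ j))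
        (Nat.lt_succ_self _)) (τ i)]
    exact Finset.sum_congr rfl fun n _ => mul_comm _ _
  have hdet : (Matrix.of fun i j => (Ψ j).eval (τ i)).det
      = (Matrix.detRowAlternating : (ι → A) [⋀^ι]→ₗ[A] A)
          (fun i => ∑ n ∈ Finset.range M, (τ i ^ n) • v n) := by
    rw [← hrow]
    rfl
  rw [hdet]
  have hexp := (Matrix.detRowAlternating : (ι → A) [⋀^ι]→ₗ[A] A).toMultilinearMap.map_sum_finset
    (fun i n => (τ i ^ n) • v n) (fun _ => Finset.range M)
  rw [show ((Matrix.detRowAlternating : (ι → A) [⋀^ι]→ₗ[A] A)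
      (fun i => ∑ n ∈ Finset.range M, (τ i ^ n) • v n))
      = ((Matrix.detRowAlternating : (ι → A) [⋀^ι]→ₗ[A] A)).toMultilinearMap
      (fun i => ∑ n ∈ Finset.range M, (τ i ^ n) • v n) from rfl, hexp]
  refine Finset.sum_eq_zero fun r _ => ?_
  have hsmul : ((Matrix.detRowAlternating : (ι → A) [⋀^ι]→ₗ[A] A)).toMultilinearMap
      (fun i => (τ i ^ r i) • v (r i))
      = (∏ i, τ i ^ r i) • ((Matrix.detRowAlternating : (ι → A) [⋀^ι]→ₗ[A] A)).toMultilinearMap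
        (fun i => v (r i)) :=
    MultilinearMap.map_smul_univ _ _ _
  rw [hsmul]
  by_cases hinj : Function.Injective r
  · rw [hz r hinj, zero_smul]
  · rw [Function.not_injective_iff] at hinj
    obtain ⟨i, i', heq, hne⟩ := hinj
    have h0 : (Matrix.detRowAlternating : (ι → A) [⋀^ι]→ₗ[A] A)
        (fun i => v (r i)) = 0 :=
      AlternatingMap.map_eq_zero_of_eq _ _ (by rw [heq]) hne
    rw [show ((Matrix.detRowAlternating : (ι → A) [⋀^ι]→ₗ[A] A)).toMultilinearMap
      (fun i => v (r i)) = (Matrix.detRowAlternating : (ι → A) [⋀^ι]→ₗ[A] A)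
      (fun i => v (r i)) from rfl, h0, smul_zero]

/-- extraction lemma : if all maximal minors vanish, the columns are dependent -/
private lemma pp1_ext {K : Type*} [Field K] {α : Type*} {S : Set α} {ι : Type*}
    [Fintype ι] [DecidableEq ι] (f : ↥S → ι → K)
    (hdet : ∀ x : ι → ↥S, (Matrix.of fun i j => f (x i) j).det = 0) :
    ∃ c : ι → K, c ≠ 0 ∧ ∀ s : ↥S, ∑ j, f s j * c j = 0 := by
  classical
  by_contra hcon
  push_neg at hcon
  set k := Fintype.card ι with hk
  set e : ι ≃ Fin k := Fintype.equivFin ι with he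
  have key : ∀ n, n ≤ k → ∃ x : Fin n → ↥S, LinearIndependent K fun i => f (x i) := by
    intro n
    induction n with
    | zero => exact fun _ => ⟨Fin.elim0, linearIndependent_empty_type⟩
    | succ n ih =>
      intro hn1
      obtain ⟨x, hx⟩ := ih (Nat.le_of_succ_le hn1)
      have hnk : n < k := Nat.lt_of_succ_le hn1
      set g : Fin k → ι → K := fun i => if h : (i : ℕ) < n then f (x ⟨i, h⟩) else 0 with hg
      set Mq : Matrix (Fin k) (Fin k) K := Matrix.of fun i j => g i (e.symm j) with hMq
      have hdet0 : Mq.det = 0 := by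
        apply Matrix.det_eq_zero_of_row_eq_zero ⟨n, hnk⟩
        intro j
        simp [hMq, hg]
      obtain ⟨w, hw0, hw⟩ := Matrix.exists_mulVec_eq_zero_iff.2 hdet0
      set c : ι → K := fun j => w (e j) with hc
      have hcne : c ≠ 0 := by
        intro h0
        apply hw0
        funext j
        have := congrFun h0 (e.symm j)
        simpa [hc] using this
      have horth : ∀ i : Fin n, ∑ j, f (x i) j * c j = 0 := by
        intro i
        have hrow := congrFun hw ⟨(i : ℕ), lt_trans i.isLt hnk⟩
        simp only [Matrix.mulVec, dotProduct, Pi.zero_apply] at hrow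
        rw [← Equiv.sum_comp e.symm (fun j => f (x i) j * c j)]
        rw [← hrow]
        refine Finset.sum_congr rfl fun j' _ => ?_
        simp only [hc, Equiv.apply_symm_apply, hMq, Matrix.of_apply, hg]
        rw [dif_pos i.isLt]
      obtain ⟨s, hs⟩ := hcon c hcne
      refine ⟨Fin.snoc x s, ?_⟩
      have hcomp : (fun i => f ((Fin.snoc x s : Fin (n + 1) → ↥S) i))
          = Fin.snoc (fun i => f (x i)) (f s) := by
        rw [show (fun i => f ((Fin.snoc x s : Fin (n + 1) → ↥S) i)) = f ∘ Fin.snoc x s from rfl,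
          Fin.comp_snoc]
        rfl
      rw [hcomp, linearIndependent_fin_snoc]
      refine ⟨hx, fun hmem => ?_⟩
      set ψ : (ι → K) →ₗ[K] K :=
        { toFun := fun wv => ∑ j, wv j * c j
          map_add' := by
            intro a b
            simp only [Pi.add_apply, add_mul, Finset.sum_add_distrib]
          map_smul' := by
            intro m a
            simp only [Pi.smul_apply, smul_eq_mul, RingHom.id_apply, Finset.mul_sum, mul_assoc] }
        with hψ
      have hker : Submodule.span K (Set.range fun i => f (x i)) ≤ LinearMap.ker ψ := by
        rw [Submodule.span_le]
        rintro - ⟨i, rfl⟩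
        exact horth i
      have hzero : ψ (f s) = 0 := hker hmem
      exact hs hzero
  obtain ⟨x, hx⟩ := key k le_rfl
  have hD0 : (Matrix.of fun (i j : ι) => f (x (e i)) j).det = 0 := hdet fun i => x (e i)
  have hDT : (Matrix.transpose (Matrix.of fun (i j : ι) => f (x (e i)) j)).det = 0 := by
    rw [Matrix.det_transpose]; exact hD0
  obtain ⟨w, hw0, hw⟩ := Matrix.exists_mulVec_eq_zero_iff.2 hDT
  have hfun : ∀ j0 : ι, ∑ i' : Fin k, w (e.symm i') * f (x i') j0 = 0 := by
    intro j0
    rw [← Equiv.sum_comp e (fun i' => w (e.symm i') * f (x i') j0)]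
    have hrow := congrFun hw j0
    simp only [Matrix.mulVec, dotProduct, Matrix.transpose_apply, Matrix.of_apply,
      Pi.zero_apply] at hrow
    rw [← hrow]
    refine Finset.sum_congr rfl fun i _ => ?_
    rw [Equiv.symm_apply_apply]
    ring
  have hsum0 : ∑ i' : Fin k, w (e.symm i') • (fun i'' => f (x i'')) i' = 0 := by
    funext j0
    rw [Finset.sum_apply]
    simp only [Pi.smul_apply, smul_eq_mul]
    exact hfun j0
  have hall := Fintype.linearIndependent_iff.1 hx (fun i' => w (e.symm i')) hsum0
  apply hw0
  funext i
  have := hall (e i)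
  simpa using this

private lemma pp1_eval₂_pair {R S : Type*} [CommRing R] [CommRing S]
    (ψ : R →+* S) (a b : R) (P : MvPolynomial (Fin 2) R) :
    MvPolynomial.eval₂ ψ ![ψ a, ψ b] P = ψ (MvPolynomial.eval ![a, b] P) := by
  have h := MvPolynomial.eval₂_comp_left ψ (RingHom.id R) ![a, b] P
  rw [show MvPolynomial.eval ![a, b] P = MvPolynomial.eval₂ (RingHom.id R) ![a, b] P from rfl]
  rw [h]
  congr 1
  · funext z; fin_cases z <;> simp

private lemma pp1_eval₂_push {R S T : Type*} [CommRing R] [CommRing S] [CommRing T]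
    (φ : R →+* S) (χ : S →+* T) (a b : S) (P : MvPolynomial (Fin 2) R) :
    χ (MvPolynomial.eval₂ φ ![a, b] P) = MvPolynomial.eval₂ (χ.comp φ) ![χ a, χ b] P := by
  have h := MvPolynomial.eval₂_comp_left χ φ ![a, b] P
  rw [h]
  congr 1
  funext i; fin_cases i <;> simp

private lemma pp1_norm_le_house {K : Type*} [Field K] [NumberField K] (φ : K →+* ℂ) (z : K) :
    ‖φ z‖ ≤ NumberField.house z := by
  have h := norm_le_pi_norm (NumberField.canonicalEmbedding K z) φ
  rwa [NumberField.canonicalEmbedding.apply_at] at h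

private lemma pp1_unit_of {R : Type*} [CommRing R] {𝔭 : Ideal R} (hmax : 𝔭.IsMaximal)
    {T : Type*} [CommRing T] (χ : R →+* T) (hχ : ∀ y ∈ 𝔭, IsNilpotent (χ y))
    {z : R} (hz : z ∉ 𝔭) : IsUnit (χ z) := by
  obtain ⟨b, c, hc, hbc⟩ := hmax.exists_inv hz
  have h1 : χ b * χ z = 1 - χ c := by
    rw [← map_mul]
    have hbz : b * z = 1 - c := by rw [← hbc]; ring
    rw [hbz, map_sub, map_one]
  have hcnil : IsNilpotent (χ c) := hχ c hc
  have hbu : IsUnit (χ b * χ z) := h1 ▸ hcnil.isUnit_one_sub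
  exact isUnit_of_mul_isUnit_right hbu

private abbrev pp1_B (A : Type*) [CommRing A] (N : ℕ) : Type _ :=
  Polynomial A ⧸ (Ideal.span {(Polynomial.X : Polynomial A) ^ N})

/-- the local determinant vanishing over a ring with enough nilpotents -/
private lemma pp1_localdet {A : Type*} [CommRing A] (N : ℕ)
    (F : MvPolynomial (Fin 2) A) {ι : Type*} [Fintype ι] [DecidableEq ι]
    (e : ι → ℕ × ℕ) (P : ι → A × A) (P0 : A × A)
    (hF0 : MvPolynomial.eval ![P0.1, P0.2] F = 0)
    (hFi : ∀ i, MvPolynomial.eval ![(P i).1, (P i).2] F = 0)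
    (hd0 : IsUnit (MvPolynomial.eval ![P0.1, P0.2] (MvPolynomial.pderiv 0 F)))
    (hdi : ∀ i, IsUnit (MvPolynomial.eval ![(P i).1, (P i).2] (MvPolynomial.pderiv 0 F)))
    (ht : ∀ i, ((P i).2 - P0.2) ^ N = 0)
    (hx1 : ∀ i, IsNilpotent ((P i).1 - P0.1))
    (hzero : ∀ r : ι → ℕ, Function.Injective r → ∏ i, ((P i).2 - P0.2) ^ r i = 0) :
    (Matrix.of fun i j => (P i).1 ^ (e j).1 * (P i).2 ^ (e j).2).det = 0 := by
  classical
  set mkB : Polynomial A →+* pp1_B A N := Ideal.Quotient.mk _ with hmkB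
  set θ : pp1_B A N := mkB Polynomial.X with hθ
  have hθN : θ ^ N = 0 := by
    rw [hθ, ← map_pow, hmkB, Ideal.Quotient.eq_zero_iff_mem]
    exact Ideal.subset_span rfl
  set κ : A →+* pp1_B A N := mkB.comp Polynomial.C with hκ
  set s : pp1_B A N := κ P0.2 + θ with hs
  set f : Polynomial (pp1_B A N) := pp1_toPolyX κ s F with hf
  set a0 : pp1_B A N := κ P0.1 with ha0
  have hfa_eval : f.eval a0 = MvPolynomial.eval₂ κ ![a0, s] F := by
    rw [hf]; exact pp1_toPolyX_eval κ s a0 F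
  have hQs : (pp1_toPolyY κ a0 F).eval s = MvPolynomial.eval₂ κ ![a0, s] F :=
    pp1_toPolyY_eval κ a0 s F
  have hQ0 : (pp1_toPolyY κ a0 F).eval (κ P0.2) = 0 := by
    rw [pp1_toPolyY_eval, ha0, pp1_eval₂_pair, hF0, map_zero]
  have hθdvd : θ ∣ f.eval a0 := by
    have h := Polynomial.sub_dvd_eval_sub s (κ P0.2) (pp1_toPolyY κ a0 F)
    rw [hQs, hQ0, sub_zero] at h
    have hsθ : s - κ P0.2 = θ := by rw [hs]; ring
    rwa [hsθ, ← hfa_eval] at h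
  have hfa_pow : (f.eval a0) ^ (2 ^ N) = 0 := by
    obtain ⟨w, hw⟩ := hθdvd
    have hNle : N ≤ 2 ^ N := Nat.le_of_lt (Nat.lt_two_pow_self (n := N))
    rw [hw, mul_pow, ← Nat.sub_add_cancel hNle, pow_add, hθN, mul_zero, zero_mul]
  have hf'unit : IsUnit (f.derivative.eval a0) := by
    rw [hf, pp1_toPolyX_derivative, pp1_toPolyX_eval]
    have hsplit := Polynomial.sub_dvd_eval_sub s (κ P0.2)
      (pp1_toPolyY κ a0 (MvPolynomial.pderiv 0 F))
    rw [pp1_toPolyY_eval, pp1_toPolyY_eval] at hsplit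
    have hsθ : s - κ P0.2 = θ := by rw [hs]; ring
    rw [hsθ] at hsplit
    obtain ⟨w, hw⟩ := hsplit
    have heq : MvPolynomial.eval₂ κ ![a0, s] (MvPolynomial.pderiv 0 F)
        = MvPolynomial.eval₂ κ ![a0, κ P0.2] (MvPolynomial.pderiv 0 F) + θ * w := by
      rw [← hw]; ring
    rw [heq, ha0, pp1_eval₂_pair]
    refine IsNilpotent.isUnit_add_left_of_commute ⟨N, ?_⟩ (hd0.map κ) (Commute.all _ _)
    rw [mul_pow, hθN, zero_mul]
  obtain ⟨ψp, hψ0, hψdvd⟩ := pp1_newton f N a0 hfa_pow hf'unit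
  have hψnil : IsNilpotent (ψp - a0) := by
    obtain ⟨w1, hw1⟩ := dvd_trans hθdvd hψdvd
    exact ⟨N, by rw [hw1, mul_pow, hθN, zero_mul]⟩
  have hψF : MvPolynomial.eval₂ κ ![ψp, s] F = 0 := by
    rw [← pp1_toPolyX_eval κ s ψp F, ← hf]
    exact hψ0
  have hpoint : ∀ i : ι, ∃ ev : pp1_B A N →+* A,
      (∀ q : Polynomial A, ev (mkB q) = q.eval ((P i).2 - P0.2))
      ∧ ev ψp = (P i).1 ∧ ev s = (P i).2 := by
    intro i
    set τ : A := (P i).2 - P0.2 with hτ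
    have hann : ∀ q ∈ Ideal.span {(Polynomial.X : Polynomial A) ^ N},
        (Polynomial.evalRingHom τ) q = 0 := by
      intro q hq
      rw [Ideal.mem_span_singleton] at hq
      obtain ⟨w, rfl⟩ := hq
      simp only [map_mul, map_pow, Polynomial.coe_evalRingHom, Polynomial.eval_X]
      rw [hτ, ht i, zero_mul]
    set ev : pp1_B A N →+* A := Ideal.Quotient.lift _ (Polynomial.evalRingHom τ) hann with hev
    have hev_mk : ∀ q : Polynomial A, ev (mkB q) = q.eval τ := by
      intro q
      rw [hev, hmkB]
      exact Ideal.Quotient.lift_mk _ _ _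
    have hevκ : ∀ z : A, ev (κ z) = z := by
      intro z
      rw [hκ, RingHom.comp_apply, hev_mk, Polynomial.eval_C]
    have hevθ : ev θ = τ := by rw [hθ, hev_mk, Polynomial.eval_X]
    have hev_s : ev s = (P i).2 := by
      rw [hs, map_add, hevκ, hevθ, hτ]
      ring
    have hψFi : MvPolynomial.eval ![ev ψp, (P i).2] F = 0 := by
      have hpush := pp1_eval₂_push κ ev ψp s F
      rw [hψF, map_zero] at hpush
      have hcast : ev.comp κ = RingHom.id A := RingHom.ext hevκ
      rw [hcast, hev_s] at hpush
      rw [← MvPolynomial.eval₂_id]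
      exact hpush.symm
    set Ri : Polynomial A := pp1_toPolyX (RingHom.id A) ((P i).2) F with hRi
    have hRiev : ∀ y : A, Ri.eval y = MvPolynomial.eval ![y, (P i).2] F := by
      intro y
      rw [hRi, pp1_toPolyX_eval, MvPolynomial.eval₂_id]
    have hRi1 : Ri.eval ((P i).1) = 0 := by rw [hRiev]; exact hFi i
    have hRi2 : Ri.eval (ev ψp) = 0 := by rw [hRiev]; exact hψFi
    set δ : A := ev ψp - (P i).1 with hδ
    obtain ⟨z, hz⟩ := Ri.binomExpansion ((P i).1) δ
    have hδnil : IsNilpotent δ := by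
      have h1 : IsNilpotent (ev (ψp - a0)) := hψnil.map ev
      have h2 : IsNilpotent (P0.1 - (P i).1) := by
        have := (hx1 i).neg
        rwa [neg_sub] at this
      have hδeq : δ = ev (ψp - a0) + (P0.1 - (P i).1) := by
        rw [hδ, map_sub]
        rw [show ev a0 = P0.1 from by rw [ha0]; exact hevκ P0.1]
        ring
      rw [hδeq]
      exact (Commute.all _ _).isNilpotent_add h1 h2
    have hd_unit : IsUnit (Ri.derivative.eval ((P i).1)) := by
      rw [hRi, pp1_toPolyX_derivative, pp1_toPolyX_eval, MvPolynomial.eval₂_id]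
      exact hdi i
    have heq0 : δ * (Ri.derivative.eval ((P i).1) + z * δ) = 0 := by
      have hval : Ri.eval ((P i).1 + δ) = 0 := by
        rw [show (P i).1 + δ = ev ψp from by rw [hδ]; ring]
        exact hRi2
      rw [hz, hRi1] at hval
      linear_combination hval
    have hU : IsUnit (Ri.derivative.eval ((P i).1) + z * δ) :=
      IsNilpotent.isUnit_add_left_of_commute
        ((Commute.all _ _).isNilpotent_mul_left hδnil) hd_unit (Commute.all _ _)
    have hδ0 : δ = 0 := by
      calc δ = δ * ((Ri.derivative.eval ((P i).1) + z * δ) * ↑hU.unit⁻¹) := by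
            rw [IsUnit.mul_val_inv, mul_one]
        _ = (δ * (Ri.derivative.eval ((P i).1) + z * δ)) * ↑hU.unit⁻¹ := by ring
        _ = 0 := by rw [heq0, zero_mul]
    have hevψ : ev ψp = (P i).1 := by
      have h := hδ0
      rw [hδ] at h
      exact sub_eq_zero.1 h
    exact ⟨ev, hev_mk, hevψ, hev_s⟩
  choose ev hev_mk hevψ hev_s using hpoint
  have hsurj : Function.Surjective mkB := Ideal.Quotient.mk_surjective
  choose Ψ hΨ using fun j : ι => hsurj (ψp ^ (e j).1 * s ^ (e j).2)
  have hentry : ∀ i j : ι,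
      (P i).1 ^ (e j).1 * (P i).2 ^ (e j).2 = (Ψ j).eval ((P i).2 - P0.2) := by
    intro i j
    calc (P i).1 ^ (e j).1 * (P i).2 ^ (e j).2
        = (ev i ψp) ^ (e j).1 * (ev i s) ^ (e j).2 := by rw [hevψ i, hev_s i]
      _ = ev i (ψp ^ (e j).1 * s ^ (e j).2) := by rw [map_mul, map_pow, map_pow]
      _ = ev i (mkB (Ψ j)) := by rw [hΨ j]
      _ = (Ψ j).eval ((P i).2 - P0.2) := hev_mk i (Ψ j)
  have hmateq : (Matrix.of fun i j => (P i).1 ^ (e j).1 * (P i).2 ^ (e j).2)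
      = Matrix.of fun i j => (Ψ j).eval ((P i).2 - P0.2) := by
    ext i j
    exact hentry i j
  rw [hmateq]
  exact pp1_detV Ψ _ hzero


/-- The set of exponent pairs `ℰ = {(e₁,e₂) : e₁ ≤ m₁, e₂ ≤ m₂, e₁ + e₂ ≤ D}`. -/
def Emonomials (m₁ m₂ D : ℕ) : Finset (ℕ × ℕ) :=
  (Finset.range (m₁ + 1) ×ˢ Finset.range (m₂ + 1)).filter fun e => e.1 + e.2 ≤ D

/-- `E = #ℰ`. -/
def Ecard (m₁ m₂ D : ℕ) : ℕ := (Emonomials m₁ m₂ D).card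

/-- `E' = Σ_{(e₁,e₂) ∈ ℰ} (e₁ + e₂)`. -/
def Esum (m₁ m₂ D : ℕ) : ℕ := ∑ e ∈ Emonomials m₁ m₂ D, (e.1 + e.2)

/-- The matrix whose rows are indexed by the points of `S` and whose columns are the
monomial values `x₁^{e₁} x₂^{e₂}`, `(e₁,e₂) ∈ ℰ` (entries viewed in `K`). -/
noncomputable def monomialMatrix {K : Type*} [Field K] [NumberField K]
    (S : Set (𝓞 K × 𝓞 K)) (m₁ m₂ D : ℕ) :
    Matrix S (Emonomials m₁ m₂ D) K :=
  Matrix.of fun x e =>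
    algebraMap (𝓞 K) K ((x : 𝓞 K × 𝓞 K).1 ^ (e : ℕ × ℕ).1 * (x : 𝓞 K × 𝓞 K).2 ^ (e : ℕ × ℕ).2)

set_option maxHeartbeats 2000000
set_option synthInstance.maxHeartbeats 1000000

/-- Proposition 3.6 of the paper: under the condition `p^{E(E-1)/2} > (E^E B^{E'})^ρ`,
(1) the monomial matrix attached to `S` has rank at most `E - 1`, and (2) there is a nonzero
polynomial `G ∈ O_K[X₁,X₂]` supported on `ℰ`, vanishing on `S`, relatively prime to `F`
over `K̄`. -/
theorem prop_p1 (K : Type*) [Field K] [NumberField K]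
    (𝔭 : Ideal (𝓞 K)) (h𝔭 : 𝔭.IsPrime) (h𝔭0 : 𝔭 ≠ ⊥)
    (F : MvPolynomial (Fin 2) (𝓞 K))
    (hFirr : Irreducible (MvPolynomial.map (algebraMap (𝓞 K) (AlgebraicClosure K)) F))
    (hd : 2 ≤ F.totalDegree)
    (m₁ m₂ : ℕ) (hm : m₁ + m₂ = F.totalDegree)
    (hcoeff : F.coeff (Finsupp.single 0 m₁ + Finsupp.single 1 m₂) ≠ 0)
    (D : ℕ) (hD : F.totalDegree ≤ D)
    (B : ℝ) (hB : 1 ≤ B)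
    (S : Set (𝓞 K × 𝓞 K))
    (hS : ∀ x ∈ S, MvPolynomial.eval ![x.1, x.2] F = 0 ∧
      house (x.1 : K) ≤ B ∧ house (x.2 : K) ≤ B ∧
      MvPolynomial.eval ![x.1, x.2] (MvPolynomial.pderiv 0 F) ∉ 𝔭)
    (hcong : ∀ x ∈ S, ∀ y ∈ S, x.1 - y.1 ∈ 𝔭 ∧ x.2 - y.2 ∈ 𝔭)
    (hineq : (Ideal.absNorm 𝔭 : ℝ) ^ (Ecard m₁ m₂ D * (Ecard m₁ m₂ D - 1) / 2) >
      ((Ecard m₁ m₂ D : ℝ) ^ (Ecard m₁ m₂ D) * B ^ (Esum m₁ m₂ D)) ^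
        (Module.finrank ℚ K)) :
    (monomialMatrix S m₁ m₂ D).rank ≤ Ecard m₁ m₂ D - 1 ∧
    ∃ G : MvPolynomial (Fin 2) (𝓞 K), G ≠ 0 ∧
      (∀ μ ∈ G.support, (μ 0, μ 1) ∈ Emonomials m₁ m₂ D) ∧
      (∀ x ∈ S, MvPolynomial.eval ![x.1, x.2] G = 0) ∧
      IsRelPrime (MvPolynomial.map (algebraMap (𝓞 K) (AlgebraicClosure K)) G)
        (MvPolynomial.map (algebraMap (𝓞 K) (AlgebraicClosure K)) F) := by
  classical
  have hmD : m₁ + m₂ ≤ D := hm ▸ hD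
  have hm2 : 2 ≤ m₁ + m₂ := hm ▸ hd
  have hfilter : Emonomials m₁ m₂ D = Finset.range (m₁ + 1) ×ˢ Finset.range (m₂ + 1) := by
    rw [Emonomials]
    apply Finset.filter_true_of_mem
    rintro ⟨a, b⟩ hab
    simp only [Finset.mem_product, Finset.mem_range] at hab
    omega
  have hmemE : ∀ a b : ℕ, ((a, b) ∈ Emonomials m₁ m₂ D) ↔ (a ≤ m₁ ∧ b ≤ m₂) := by
    intro a b
    rw [hfilter]
    simp only [Finset.mem_product, Finset.mem_range]
    omega
  have hmm_mem : (m₁, m₂) ∈ Emonomials m₁ m₂ D := (hmemE m₁ m₂).2 ⟨le_rfl, le_rfl⟩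
  have h00_mem : ((0, 0) : ℕ × ℕ) ∈ Emonomials m₁ m₂ D :=
    (hmemE 0 0).2 ⟨Nat.zero_le _, Nat.zero_le _⟩
  have hne00 : ((0, 0) : ℕ × ℕ) ≠ (m₁, m₂) := by
    intro h
    rw [Prod.ext_iff] at h
    omega
  set E := Ecard m₁ m₂ D with hE
  have hEcard : E = (m₁ + 1) * (m₂ + 1) := by
    rw [hE, Ecard, hfilter, Finset.card_product, Finset.card_range, Finset.card_range]
  have hE3 : 3 ≤ E := by
    rw [hEcard]
    have hexp : (m₁ + 1) * (m₂ + 1) = m₁ * m₂ + m₁ + m₂ + 1 := by ring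
    omega
  set E' := Esum m₁ m₂ D with hE'
  have hgauss : ∀ n : ℕ, 2 * (∑ i ∈ Finset.range (n + 1), i) = n * (n + 1) := by
    intro n
    calc 2 * (∑ i ∈ Finset.range (n + 1), i) = (∑ i ∈ Finset.range (n + 1), i) * 2 := by ring
      _ = (n + 1) * ((n + 1) - 1) := Finset.sum_range_id_mul_two (n + 1)
      _ = n * (n + 1) := by simp [Nat.add_sub_cancel]; ring
  have hEsum2 : 2 * E' = (m₁ + m₂) * E := by
    rw [hE', Esum, hfilter, Finset.sum_product]
    have hinner : ∀ a : ℕ, (∑ b ∈ Finset.range (m₂ + 1), (a + b))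
        = (m₂ + 1) * a + ∑ b ∈ Finset.range (m₂ + 1), b := by
      intro a
      rw [Finset.sum_add_distrib, Finset.sum_const, Finset.card_range, smul_eq_mul]
    rw [Finset.sum_congr rfl fun a _ => hinner a]
    rw [Finset.sum_add_distrib, Finset.sum_const, Finset.card_range, smul_eq_mul]
    rw [← Finset.mul_sum, hEcard, Nat.mul_add]
    rw [show 2 * ((m₂ + 1) * ∑ a ∈ Finset.range (m₁ + 1), a)
        = (m₂ + 1) * (2 * ∑ a ∈ Finset.range (m₁ + 1), a) from by ring, hgauss m₁]
    rw [show 2 * ((m₁ + 1) * ∑ b ∈ Finset.range (m₂ + 1), b)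
        = (m₁ + 1) * (2 * ∑ b ∈ Finset.range (m₂ + 1), b) from by ring, hgauss m₂]
    ring
  set Er := (Emonomials m₁ m₂ D).erase (m₁, m₂) with hEr
  have hErcard : Er.card = E - 1 := by
    rw [hEr, Finset.card_erase_of_mem hmm_mem, hE, Ecard]
  have h00Er : ((0, 0) : ℕ × ℕ) ∈ Er := Finset.mem_erase.2 ⟨hne00, h00_mem⟩
  have hcardι : Fintype.card ↥Er = E - 1 := by rw [Fintype.card_coe, hErcard]
  set N := (E - 1) * (E - 2) / 2 with hN
  have hEsplit : (m₁ + m₂) + ∑ e ∈ Er, (e.1 + e.2) = E' := by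
    rw [hE', Esum, hEr]
    simpa using Finset.add_sum_erase _ (fun e : ℕ × ℕ => e.1 + e.2) hmm_mem
  set Sg := ∑ e ∈ Er, (e.1 + e.2) with hSg
  -- main arithmetic consequence of hineq
  have harith : ((Nat.factorial (E - 1) : ℝ) * B ^ Sg) ^ (Module.finrank ℚ K)
      < (Ideal.absNorm 𝔭 : ℝ) ^ N := by
    have hB0 : (0 : ℝ) ≤ B := le_trans zero_le_one hB
    set p : ℝ := (Ideal.absNorm 𝔭 : ℝ) with hp
    have hp0 : (0 : ℝ) ≤ p := Nat.cast_nonneg _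
    have hE1 : E - 1 + 1 = E := by omega
    have hE2 : E - 2 + 1 = E - 1 := by omega
    have hdvd1 : 2 ∣ E * (E - 1) := by
      have h := Nat.even_mul_succ_self (E - 1)
      rw [hE1] at h
      rw [mul_comm]
      exact h.two_dvd
    have hdvd2 : 2 ∣ (E - 1) * (E - 2) := by
      have h := Nat.even_mul_succ_self (E - 2)
      rw [hE2] at h
      rw [mul_comm]
      exact h.two_dvd
    have hNE : (E * (E - 1) / 2) * (E - 2) = N * E := by
      have h1 : E * (E - 1) / 2 * 2 = E * (E - 1) := Nat.div_mul_cancel hdvd1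
      have h2 : N * 2 = (E - 1) * (E - 2) := Nat.div_mul_cancel hdvd2
      have hmain : (E * (E - 1) / 2 * (E - 2)) * 2 = (N * E) * 2 := by
        calc (E * (E - 1) / 2 * (E - 2)) * 2 = (E * (E - 1) / 2 * 2) * (E - 2) := by ring
          _ = (E * (E - 1)) * (E - 2) := by rw [h1]
          _ = ((E - 1) * (E - 2)) * E := by ring
          _ = (N * 2) * E := by rw [h2]
          _ = (N * E) * 2 := by ring
      exact Nat.eq_of_mul_eq_mul_right (by norm_num) hmain
    have hSE : 2 * Sg = (m₁ + m₂) * (E - 2) := by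
      have hEeq : E = (E - 2) + 2 := by omega
      have hd2 : (m₁ + m₂) * E = (m₁ + m₂) * (E - 2) + 2 * (m₁ + m₂) := by
        calc (m₁ + m₂) * E = (m₁ + m₂) * ((E - 2) + 2) := by rw [← hEeq]
          _ = (m₁ + m₂) * (E - 2) + 2 * (m₁ + m₂) := by ring
      have h3 : 2 * ((m₁ + m₂) + Sg) = (m₁ + m₂) * E := by rw [hSg, hEsplit]; exact hEsum2
      have h4 : 2 * (m₁ + m₂) + 2 * Sg = 2 * (m₁ + m₂) + (m₁ + m₂) * (E - 2) := by
        calc 2 * (m₁ + m₂) + 2 * Sg = 2 * ((m₁ + m₂) + Sg) := by ring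
          _ = (m₁ + m₂) * (E - 2) + 2 * (m₁ + m₂) := by rw [h3, hd2]
          _ = 2 * (m₁ + m₂) + (m₁ + m₂) * (E - 2) := by ring
      exact Nat.add_left_cancel h4
    have hSgE : Sg * E = E' * (E - 2) := by
      have hmain : 2 * (Sg * E) = 2 * (E' * (E - 2)) := by
        calc 2 * (Sg * E) = (2 * Sg) * E := by ring
          _ = ((m₁ + m₂) * (E - 2)) * E := by rw [hSE]
          _ = ((m₁ + m₂) * E) * (E - 2) := by ring
          _ = (2 * E') * (E - 2) := by rw [hEsum2]
          _ = 2 * (E' * (E - 2)) := by ring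
      exact Nat.eq_of_mul_eq_mul_left (by norm_num) hmain
    have hRg0 : (0 : ℝ) ≤ ((E : ℝ) ^ E * B ^ E') ^ (Module.finrank ℚ K) := by positivity
    have hfact : ((Nat.factorial (E - 1) : ℝ)) ^ E ≤ ((E : ℝ) ^ E) ^ (E - 2) := by
      have hnat : (Nat.factorial (E - 1)) ^ E ≤ (E ^ (E - 2)) ^ E := by
        apply Nat.pow_le_pow_left
        have h := pp1_factorial_le (E - 1)
        rwa [hE1, show E - 1 - 1 = E - 2 from by omega] at h
      calc ((Nat.factorial (E - 1) : ℝ)) ^ E ≤ ((E : ℝ) ^ (E - 2)) ^ E := by exact_mod_cast hnat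
        _ = ((E : ℝ) ^ E) ^ (E - 2) := by rw [← pow_mul, ← pow_mul, Nat.mul_comm]
    have hBpow : (B ^ Sg) ^ E = (B ^ E') ^ (E - 2) := by
      rw [← pow_mul, ← pow_mul, hSgE]
    have hbase : (((Nat.factorial (E - 1) : ℝ)) * B ^ Sg) ^ E
        ≤ ((E : ℝ) ^ E * B ^ E') ^ (E - 2) := by
      rw [mul_pow, mul_pow, hBpow]
      exact mul_le_mul_of_nonneg_right hfact (by positivity)
    have hpow1 : ((((Nat.factorial (E - 1) : ℝ)) * B ^ Sg) ^ (Module.finrank ℚ K)) ^ E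
        ≤ (((E : ℝ) ^ E * B ^ E') ^ (Module.finrank ℚ K)) ^ (E - 2) := by
      calc ((((Nat.factorial (E - 1) : ℝ)) * B ^ Sg) ^ (Module.finrank ℚ K)) ^ E
          = ((((Nat.factorial (E - 1) : ℝ)) * B ^ Sg) ^ E) ^ (Module.finrank ℚ K) := by
            rw [← pow_mul, ← pow_mul, Nat.mul_comm]
        _ ≤ (((E : ℝ) ^ E * B ^ E') ^ (E - 2)) ^ (Module.finrank ℚ K) :=
            pow_le_pow_left₀ (by positivity) hbase _
        _ = (((E : ℝ) ^ E * B ^ E') ^ (Module.finrank ℚ K)) ^ (E - 2) := by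
            rw [← pow_mul, ← pow_mul, Nat.mul_comm]
    have hstrict : (((E : ℝ) ^ E * B ^ E') ^ (Module.finrank ℚ K)) ^ (E - 2)
        < (p ^ N) ^ E := by
      have h1 : (((E : ℝ) ^ E * B ^ E') ^ (Module.finrank ℚ K)) ^ (E - 2)
          < (p ^ (E * (E - 1) / 2)) ^ (E - 2) :=
        pow_lt_pow_left₀ hineq hRg0 (by omega)
      have h2 : (p ^ (E * (E - 1) / 2)) ^ (E - 2) = (p ^ N) ^ E := by
        rw [← pow_mul, ← pow_mul, hNE]
      rw [← h2]
      exact h1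
    by_contra hcontra
    push_neg at hcontra
    have hchain : (p ^ N) ^ E ≤ ((((Nat.factorial (E - 1) : ℝ)) * B ^ Sg)
        ^ (Module.finrank ℚ K)) ^ E :=
      pow_le_pow_left₀ (by positivity) hcontra E
    exact absurd (lt_of_le_of_lt (le_trans hchain hpow1) hstrict) (lt_irrefl _)
  -- CORE: every maximal minor with columns Er vanishes
  have core : ∀ x : ↥Er → ↥S,
      (Matrix.of fun (i j : ↥Er) => (algebraMap (𝓞 K) K)
        ((x i : 𝓞 K × 𝓞 K).1 ^ (j : ℕ × ℕ).1 * (x i : 𝓞 K × 𝓞 K).2 ^ (j : ℕ × ℕ).2)).det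
        = 0 := by
    intro x
    set Δ : 𝓞 K := (Matrix.of fun (i j : ↥Er) =>
      ((x i : 𝓞 K × 𝓞 K).1 ^ (j : ℕ × ℕ).1 * (x i : 𝓞 K × 𝓞 K).2 ^ (j : ℕ × ℕ).2)).det with hΔ
    have hdetmap : (Matrix.of fun (i j : ↥Er) => (algebraMap (𝓞 K) K)
        ((x i : 𝓞 K × 𝓞 K).1 ^ (j : ℕ × ℕ).1 * (x i : 𝓞 K × 𝓞 K).2 ^ (j : ℕ × ℕ).2)).det
        = algebraMap (𝓞 K) K Δ := by
      rw [hΔ, RingHom.map_det]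
      rfl
    rw [hdetmap]
    suffices h : Δ = 0 by rw [h, map_zero]
    have hmax : 𝔭.IsMaximal := Ideal.IsPrime.isMaximal h𝔭 h𝔭0
    have hstepA : Δ ∈ 𝔭 ^ N := by
      set mkA : 𝓞 K →+* (𝓞 K ⧸ 𝔭 ^ N) := Ideal.Quotient.mk (𝔭 ^ N) with hmkA
      have hmkA_nil : ∀ z ∈ 𝔭, (mkA z) ^ N = 0 := by
        intro z hz
        rw [← map_pow, hmkA, Ideal.Quotient.eq_zero_iff_mem]
        exact Ideal.pow_mem_pow hz N
      have hmkA_nilp : ∀ y ∈ 𝔭, IsNilpotent (mkA y) := fun y hy => ⟨N, hmkA_nil y hy⟩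
      have hunitA : ∀ z : 𝓞 K, z ∉ 𝔭 → IsUnit (mkA z) := fun z hz => pp1_unit_of hmax mkA hmkA_nilp hz
      set P0 : 𝓞 K × 𝓞 K := (x ⟨(0, 0), h00Er⟩ : 𝓞 K × 𝓞 K) with hP0
      have hP0S : P0 ∈ S := (x ⟨(0, 0), h00Er⟩).2
      obtain ⟨hFP0, -, -, hdFP0⟩ := hS P0 hP0S
      have hevalmap : ∀ (a b : 𝓞 K) (P : MvPolynomial (Fin 2) (𝓞 K)),
          MvPolynomial.eval ![mkA a, mkA b] (MvPolynomial.map mkA P)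
          = mkA (MvPolynomial.eval ![a, b] P) := by
        intro a b P
        rw [MvPolynomial.eval_map]
        exact pp1_eval₂_pair mkA a b P
      have hdetA : mkA Δ = 0 := by
        have h2 : mkA Δ = (Matrix.of fun (i j : ↥Er) =>
              (mkA (x i : 𝓞 K × 𝓞 K).1) ^ (j : ℕ × ℕ).1
                * (mkA (x i : 𝓞 K × 𝓞 K).2) ^ (j : ℕ × ℕ).2).det := by
          rw [hΔ, RingHom.map_det]
          refine congrArg Matrix.det ?_
          ext i j
          simp [Matrix.map_apply, map_mul, map_pow]
        rw [h2]
        have hF0' : MvPolynomial.eval ![mkA P0.1, mkA P0.2] (MvPolynomial.map mkA F) = 0 := by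
          rw [hevalmap, hFP0, map_zero]
        have hFi' : ∀ i : ↥Er, MvPolynomial.eval
            ![mkA (x i : 𝓞 K × 𝓞 K).1, mkA (x i : 𝓞 K × 𝓞 K).2] (MvPolynomial.map mkA F) = 0 := by
          intro i
          rw [hevalmap, (hS _ (x i).2).1, map_zero]
        have hd0' : IsUnit (MvPolynomial.eval ![mkA P0.1, mkA P0.2]
            (MvPolynomial.pderiv 0 (MvPolynomial.map mkA F))) := by
          rw [MvPolynomial.pderiv_map, hevalmap]
          exact hunitA _ hdFP0
        have hdi' : ∀ i : ↥Er, IsUnit (MvPolynomial.eval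
            ![mkA (x i : 𝓞 K × 𝓞 K).1, mkA (x i : 𝓞 K × 𝓞 K).2]
            (MvPolynomial.pderiv 0 (MvPolynomial.map mkA F))) := by
          intro i
          rw [MvPolynomial.pderiv_map, hevalmap]
          exact hunitA _ (hS _ (x i).2).2.2.2
        have ht' : ∀ i : ↥Er, (mkA (x i : 𝓞 K × 𝓞 K).2 - mkA P0.2) ^ N = 0 := by
          intro i
          rw [← map_sub]
          exact hmkA_nil _ (hcong _ (x i).2 P0 hP0S).2
        have hx1' : ∀ i : ↥Er, IsNilpotent (mkA (x i : 𝓞 K × 𝓞 K).1 - mkA P0.1) := by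
          intro i
          rw [← map_sub]
          exact hmkA_nilp _ (hcong _ (x i).2 P0 hP0S).1
        have hzero' : ∀ r : ↥Er → ℕ, Function.Injective r →
            ∏ i : ↥Er, (mkA (x i : 𝓞 K × 𝓞 K).2 - mkA P0.2) ^ r i = 0 := by
          intro r hr
          have hsumN : N ≤ ∑ i, r i := by
            have h := pp1_sum_inj r hr
            rw [hcardι, show E - 1 - 1 = E - 2 from by omega] at h
            exact h
          have hmem : (∏ i : ↥Er, ((x i : 𝓞 K × 𝓞 K).2 - P0.2) ^ r i) ∈ 𝔭 ^ N := by
            have hprmem : (∏ i : ↥Er, ((x i : 𝓞 K × 𝓞 K).2 - P0.2) ^ r i)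
                ∈ ∏ i : ↥Er, (𝔭 : Ideal (𝓞 K)) ^ r i :=
              Ideal.prod_mem_prod fun i _ =>
                Ideal.pow_mem_pow ((hcong _ (x i).2 P0 hP0S).2) _
            have hprodpow : (∏ i : ↥Er, (𝔭 : Ideal (𝓞 K)) ^ r i) = 𝔭 ^ (∑ i, r i) :=
              Finset.prod_pow_eq_pow_sum _ _ _
            exact Ideal.pow_le_pow_right hsumN (hprodpow ▸ hprmem)
          calc ∏ i : ↥Er, (mkA (x i : 𝓞 K × 𝓞 K).2 - mkA P0.2) ^ r i
              = mkA (∏ i : ↥Er, ((x i : 𝓞 K × 𝓞 K).2 - P0.2) ^ r i) := by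
                rw [map_prod]
                exact Finset.prod_congr rfl fun i _ => by rw [map_pow, map_sub]
            _ = 0 := by rwa [hmkA, Ideal.Quotient.eq_zero_iff_mem]
        exact pp1_localdet N (MvPolynomial.map mkA F) (fun j : ↥Er => (j : ℕ × ℕ))
          (fun i => (mkA (x i : 𝓞 K × 𝓞 K).1, mkA (x i : 𝓞 K × 𝓞 K).2))
          (mkA P0.1, mkA P0.2) hF0' hFi' hd0' hdi' ht' hx1' hzero'
      rwa [hmkA, Ideal.Quotient.eq_zero_iff_mem] at hdetA
    -- Step B : the norm bound
    by_contra hΔne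
    have hdvd : Ideal.absNorm (𝔭 ^ N) ∣ Ideal.absNorm (Ideal.span {Δ}) :=
      Ideal.absNorm_dvd_absNorm_of_le (by rwa [Ideal.span_le, Set.singleton_subset_iff])
    have hnrm0 : Ideal.absNorm (Ideal.span {Δ}) ≠ 0 := by
      rw [Ne, Ideal.absNorm_eq_zero_iff, Ideal.span_singleton_eq_bot]
      exact hΔne
    have hple : (Ideal.absNorm 𝔭) ^ N ≤ Ideal.absNorm (Ideal.span {Δ}) := by
      refine Nat.le_of_dvd (Nat.pos_of_ne_zero hnrm0) ?_
      rwa [map_pow] at hdvd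
    have hnrm_eq : ((Ideal.absNorm (Ideal.span {Δ}) : ℝ))
        = ∏ σ : K →ₐ[ℚ] ℂ, ‖σ ((algebraMap (𝓞 K) K) Δ)‖ := by
      have h1 : ((Ideal.absNorm (Ideal.span {Δ}) : ℝ)) = ((Algebra.norm ℤ Δ).natAbs : ℝ) := by
        rw [Ideal.absNorm_span_singleton]
      have h2 : (((Algebra.norm ℤ Δ).natAbs : ℝ)) = |((Algebra.norm ℤ Δ : ℝ))| := by
        rw [Nat.cast_natAbs, Int.cast_abs]
      have h3 : |((Algebra.norm ℤ Δ : ℝ))| = |(((Algebra.norm ℚ ((Δ : K))) : ℝ))| := by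
        rw [← Algebra.coe_norm_int]
        norm_cast
      have h4 : |(((Algebra.norm ℚ ((Δ : K))) : ℝ))| = ∏ σ : K →ₐ[ℚ] ℂ, ‖σ ((Δ : K))‖ := by
        have habs := congrArg norm (Algebra.norm_eq_prod_embeddings ℚ ℂ ((Δ : K)))
        rw [norm_prod, eq_ratCast (algebraMap ℚ ℂ), Complex.norm_ratCast] at habs
        exact habs
      rw [h1, h2, h3, h4]
    have hbound : ∀ σ : K →ₐ[ℚ] ℂ, ‖σ ((algebraMap (𝓞 K) K) Δ)‖
        ≤ (Nat.factorial (E - 1) : ℝ) * B ^ Sg := by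
      intro σ
      set χ : 𝓞 K →+* ℂ := (σ : K →+* ℂ).comp (algebraMap (𝓞 K) K) with hχ
      have hσdet : σ ((algebraMap (𝓞 K) K) Δ) = (Matrix.of fun (i j : ↥Er) =>
          χ ((x i : 𝓞 K × 𝓞 K).1 ^ (j : ℕ × ℕ).1
            * (x i : 𝓞 K × 𝓞 K).2 ^ (j : ℕ × ℕ).2)).det := by
        rw [hΔ]
        rw [show σ ((algebraMap (𝓞 K) K) ((Matrix.of fun (i j : ↥Er) =>
          ((x i : 𝓞 K × 𝓞 K).1 ^ (j : ℕ × ℕ).1 * (x i : 𝓞 K × 𝓞 K).2 ^ (j : ℕ × ℕ).2)).det))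
          = χ ((Matrix.of fun (i j : ↥Er) =>
          ((x i : 𝓞 K × 𝓞 K).1 ^ (j : ℕ × ℕ).1 * (x i : 𝓞 K × 𝓞 K).2 ^ (j : ℕ × ℕ).2)).det)
          from rfl]
        rw [RingHom.map_det]
        rfl
      rw [hσdet, Matrix.det_apply]
      refine le_trans (norm_sum_le _ _) ?_
      have hxB : ∀ y : ↥S, ‖χ (y : 𝓞 K × 𝓞 K).1‖ ≤ B ∧ ‖χ (y : 𝓞 K × 𝓞 K).2‖ ≤ B := by
        intro y
        obtain ⟨-, hB1, hB2, -⟩ := hS _ y.2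
        exact ⟨le_trans (pp1_norm_le_house (σ : K →+* ℂ) _) hB1,
          le_trans (pp1_norm_le_house (σ : K →+* ℂ) _) hB2⟩
      have hterm : ∀ π : Equiv.Perm ↥Er,
          ‖Equiv.Perm.sign π • ∏ i : ↥Er, (Matrix.of fun (i j : ↥Er) =>
            χ ((x i : 𝓞 K × 𝓞 K).1 ^ (j : ℕ × ℕ).1 * (x i : 𝓞 K × 𝓞 K).2 ^ (j : ℕ × ℕ).2))
            (π i) i‖ ≤ B ^ Sg := by
        intro π
        have hsign : ‖Equiv.Perm.sign π • ∏ i : ↥Er, (Matrix.of fun (i j : ↥Er) =>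
            χ ((x i : 𝓞 K × 𝓞 K).1 ^ (j : ℕ × ℕ).1 * (x i : 𝓞 K × 𝓞 K).2 ^ (j : ℕ × ℕ).2))
            (π i) i‖ = ‖∏ i : ↥Er, (Matrix.of fun (i j : ↥Er) =>
            χ ((x i : 𝓞 K × 𝓞 K).1 ^ (j : ℕ × ℕ).1 * (x i : 𝓞 K × 𝓞 K).2 ^ (j : ℕ × ℕ).2))
            (π i) i‖ := by
          rcases Int.units_eq_one_or (Equiv.Perm.sign π) with hsg | hsg <;>
            rw [hsg] <;> simp [Units.smul_def]
        rw [hsign, norm_prod]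
        have hone : ∀ i : ↥Er, ‖(Matrix.of fun (i j : ↥Er) =>
            χ ((x i : 𝓞 K × 𝓞 K).1 ^ (j : ℕ × ℕ).1 * (x i : 𝓞 K × 𝓞 K).2 ^ (j : ℕ × ℕ).2))
            (π i) i‖ ≤ B ^ ((i : ℕ × ℕ).1 + (i : ℕ × ℕ).2) := by
          intro i
          simp only [Matrix.of_apply]
          rw [map_mul, map_pow, map_pow, norm_mul, norm_pow, norm_pow, pow_add]
          exact mul_le_mul (pow_le_pow_left₀ (norm_nonneg _) (hxB (x (π i))).1 _)
            (pow_le_pow_left₀ (norm_nonneg _) (hxB (x (π i))).2 _) (by positivity) (by positivity)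
        calc (∏ i : ↥Er, ‖(Matrix.of fun (i j : ↥Er) =>
            χ ((x i : 𝓞 K × 𝓞 K).1 ^ (j : ℕ × ℕ).1 * (x i : 𝓞 K × 𝓞 K).2 ^ (j : ℕ × ℕ).2))
            (π i) i‖) ≤ (∏ i : ↥Er, B ^ ((i : ℕ × ℕ).1 + (i : ℕ × ℕ).2)) :=
            Finset.prod_le_prod (fun _ _ => norm_nonneg _) (fun i _ => hone i)
          _ = ∏ e ∈ Er, B ^ (e.1 + e.2) :=
            Finset.prod_coe_sort Er (fun e => B ^ (e.1 + e.2))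
          _ = B ^ Sg := by rw [hSg, Finset.prod_pow_eq_pow_sum]
      calc (∑ π : Equiv.Perm ↥Er, ‖Equiv.Perm.sign π • ∏ i : ↥Er,
            (Matrix.of fun (i j : ↥Er) => χ ((x i : 𝓞 K × 𝓞 K).1 ^ (j : ℕ × ℕ).1
              * (x i : 𝓞 K × 𝓞 K).2 ^ (j : ℕ × ℕ).2)) (π i) i‖)
          ≤ (∑ _π : Equiv.Perm ↥Er, B ^ Sg) := Finset.sum_le_sum fun π _ => hterm π
        _ = (Fintype.card (Equiv.Perm ↥Er) : ℝ) * B ^ Sg := by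
            rw [Finset.sum_const, Finset.card_univ, nsmul_eq_mul]
        _ = (Nat.factorial (E - 1) : ℝ) * B ^ Sg := by
            rw [Fintype.card_perm, hcardι]
    have hprod_le : ((Ideal.absNorm (Ideal.span {Δ}) : ℝ))
        ≤ ((Nat.factorial (E - 1) : ℝ) * B ^ Sg) ^ (Module.finrank ℚ K) := by
      rw [hnrm_eq]
      calc (∏ σ : K →ₐ[ℚ] ℂ, ‖σ ((algebraMap (𝓞 K) K) Δ)‖)
          ≤ (∏ _σ : K →ₐ[ℚ] ℂ, ((Nat.factorial (E - 1) : ℝ) * B ^ Sg)) :=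
            Finset.prod_le_prod (fun _ _ => norm_nonneg _) (fun σ _ => hbound σ)
        _ = ((Nat.factorial (E - 1) : ℝ) * B ^ Sg) ^ (Fintype.card (K →ₐ[ℚ] ℂ)) := by
            rw [Finset.prod_const, Finset.card_univ]
        _ = ((Nat.factorial (E - 1) : ℝ) * B ^ Sg) ^ (Module.finrank ℚ K) := by
            rw [AlgHom.card]
    have h1 : ((Ideal.absNorm 𝔭 : ℝ)) ^ N ≤ ((Ideal.absNorm (Ideal.span {Δ}) : ℝ)) := by
      exact_mod_cast hple
    linarith [harith, hprod_le, h1]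
  -- extraction of a dependence among the Er-columns
  obtain ⟨c, hc0, hcsum⟩ := pp1_ext (S := S)
    (fun s (j : ↥Er) => (algebraMap (𝓞 K) K)
      ((s : 𝓞 K × 𝓞 K).1 ^ (j : ℕ × ℕ).1 * (s : 𝓞 K × 𝓞 K).2 ^ (j : ℕ × ℕ).2))
    (fun x => core x)
  set c' : ℕ × ℕ → K := fun e => if h : e ∈ Er then c ⟨e, h⟩ else 0 with hc'
  have hc'Er : ∀ j : ↥Er, c' (j : ℕ × ℕ) = c j := by
    intro j
    rw [hc']
    simp only [dif_pos j.2]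
  have hc'sum : ∀ x ∈ S,
      ∑ e ∈ Er, c' e * (algebraMap (𝓞 K) K) (x.1 ^ e.1 * x.2 ^ e.2) = 0 := by
    intro x hx
    rw [← Finset.sum_coe_sort Er
      (fun e => c' e * (algebraMap (𝓞 K) K) (x.1 ^ e.1 * x.2 ^ e.2))]
    rw [← hcsum ⟨x, hx⟩]
    refine Finset.sum_congr rfl fun j _ => ?_
    rw [hc'Er j, mul_comm]
  obtain ⟨j₀, hj₀⟩ : ∃ j : ↥Er, c j ≠ 0 := by
    by_contra hcon
    push_neg at hcon
    exact hc0 (funext hcon)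
  have hc'j₀ : c' (j₀ : ℕ × ℕ) ≠ 0 := by
    rw [hc'Er j₀]
    exact hj₀
  have hc'mm : c' (m₁, m₂) = 0 := by
    rw [hc']
    exact dif_neg (Finset.notMem_erase _ _)
  -- part 1 : the rank bound
  have part1 : (monomialMatrix S m₁ m₂ D).rank ≤ E - 1 := by
    set chat : ↥(Emonomials m₁ m₂ D) → K := fun e => c' (e : ℕ × ℕ) with hchat
    have hchatker : (monomialMatrix S m₁ m₂ D).mulVecLin chat = 0 := by
      rw [Matrix.mulVecLin_apply]
      funext xS
      simp only [Pi.zero_apply]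
      rw [show ((monomialMatrix S m₁ m₂ D).mulVec chat) xS
          = ∑ e : ↥(Emonomials m₁ m₂ D), (algebraMap (𝓞 K) K)
            ((xS : 𝓞 K × 𝓞 K).1 ^ (e : ℕ × ℕ).1 * (xS : 𝓞 K × 𝓞 K).2 ^ (e : ℕ × ℕ).2)
            * c' (e : ℕ × ℕ) from rfl]
      rw [Finset.sum_coe_sort (Emonomials m₁ m₂ D)
        (fun e => (algebraMap (𝓞 K) K)
          ((xS : 𝓞 K × 𝓞 K).1 ^ e.1 * (xS : 𝓞 K × 𝓞 K).2 ^ e.2) * c' e)]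
      rw [← Finset.add_sum_erase _ (fun e : ℕ × ℕ => (algebraMap (𝓞 K) K)
        ((xS : 𝓞 K × 𝓞 K).1 ^ e.1 * (xS : 𝓞 K × 𝓞 K).2 ^ e.2) * c' e) hmm_mem]
      rw [hc'mm, mul_zero, zero_add]
      rw [show ((Emonomials m₁ m₂ D).erase (m₁, m₂)) = Er from hEr.symm]
      rw [← hc'sum (xS : 𝓞 K × 𝓞 K) xS.2]
      refine Finset.sum_congr rfl fun e _ => mul_comm _ _
    have hchatne : chat ≠ 0 := by
      intro h0
      apply hc'j₀
      have := congrFun h0 ⟨(j₀ : ℕ × ℕ), Finset.erase_subset _ _ j₀.2⟩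
      simpa [hchat] using this
    have hkerne : LinearMap.ker (monomialMatrix S m₁ m₂ D).mulVecLin ≠ ⊥ := by
      intro hbot
      apply hchatne
      have hmem : chat ∈ LinearMap.ker (monomialMatrix S m₁ m₂ D).mulVecLin :=
        LinearMap.mem_ker.2 hchatker
      rw [hbot, Submodule.mem_bot] at hmem
      exact hmem
    have hrn := LinearMap.finrank_range_add_finrank_ker (monomialMatrix S m₁ m₂ D).mulVecLin
    have hdom : Module.finrank K (↥(Emonomials m₁ m₂ D) → K) = E := by
      rw [Module.finrank_pi, Fintype.card_coe, hE, Ecard]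
    have hkpos : Module.finrank K
        (LinearMap.ker (monomialMatrix S m₁ m₂ D).mulVecLin) ≠ 0 := by
      intro h0
      exact hkerne (Submodule.finrank_eq_zero.1 h0)
    show Module.finrank K (LinearMap.range (monomialMatrix S m₁ m₂ D).mulVecLin) ≤ E - 1
    rw [hdom] at hrn
    omega
  refine ⟨part1, ?_⟩
  -- part 2 : construction of G
  obtain ⟨bden, hbden⟩ :=
    IsLocalization.exist_integer_multiples (nonZeroDivisors (𝓞 K)) Er c'
  have hnum_ex : ∀ e ∈ Er, ∃ z : 𝓞 K, algebraMap (𝓞 K) K z = (bden : 𝓞 K) • c' e := by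
    intro e he
    obtain ⟨z, hz⟩ := hbden e he
    exact ⟨z, hz⟩
  choose numf hnumf using hnum_ex
  set num : ℕ × ℕ → 𝓞 K := fun e => if h : e ∈ Er then numf e h else 0 with hnum
  have hnum_spec : ∀ e (he : e ∈ Er), algebraMap (𝓞 K) K (num e) = (bden : 𝓞 K) • c' e := by
    intro e he
    rw [hnum]
    simp only [dif_pos he]
    exact hnumf e he
  set μf : ℕ × ℕ → (Fin 2 →₀ ℕ) := fun e => Finsupp.single 0 e.1 + Finsupp.single 1 e.2
    with hμf
  have hμ0 : ∀ e : ℕ × ℕ, μf e 0 = e.1 := by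
    intro e
    rw [hμf]
    simp [Finsupp.single_apply]
  have hμ1 : ∀ e : ℕ × ℕ, μf e 1 = e.2 := by
    intro e
    rw [hμf]
    simp [Finsupp.single_apply]
  have hμinj : Function.Injective μf := by
    intro a b hab
    have h0 := congrArg (fun u : Fin 2 →₀ ℕ => u 0) hab
    have h1 := congrArg (fun u : Fin 2 →₀ ℕ => u 1) hab
    simp only [hμ0, hμ1] at h0 h1
    exact Prod.ext h0 h1
  set G : MvPolynomial (Fin 2) (𝓞 K) :=
    ∑ e ∈ Er, MvPolynomial.monomial (μf e) (num e) with hG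
  have hGcoeff : ∀ u : Fin 2 →₀ ℕ,
      G.coeff u = ∑ e ∈ Er, if μf e = u then num e else 0 := by
    intro u
    rw [hG, MvPolynomial.coeff_sum]
    exact Finset.sum_congr rfl fun e _ => MvPolynomial.coeff_monomial _ _ _
  have hcoeff_e : ∀ e ∈ Er, G.coeff (μf e) = num e := by
    intro e he
    rw [hGcoeff]
    rw [Finset.sum_eq_single e]
    · rw [if_pos rfl]
    · intro e' _ hne
      rw [if_neg]
      intro heq
      exact hne (hμinj heq)
    · intro h
      exact absurd he h
  have hsupp : ∀ u ∈ G.support, ∃ e ∈ Er, μf e = u := by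
    intro u hu
    rw [MvPolynomial.mem_support_iff, hGcoeff] at hu
    obtain ⟨e, he, hne⟩ := Finset.exists_ne_zero_of_sum_ne_zero hu
    refine ⟨e, he, ?_⟩
    by_contra h
    rw [if_neg h] at hne
    exact hne rfl
  have halg_inj : Function.Injective (algebraMap (𝓞 K) K) := IsFractionRing.injective _ _
  have hbne : (algebraMap (𝓞 K) K) (bden : 𝓞 K) ≠ 0 := by
    rw [Ne, map_eq_zero_iff _ halg_inj]
    exact nonZeroDivisors.coe_ne_zero bden
  have hnumj₀ : num (j₀ : ℕ × ℕ) ≠ 0 := by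
    intro h0
    have := hnum_spec _ j₀.2
    rw [h0, map_zero, Algebra.smul_def] at this
    rcases mul_eq_zero.1 this.symm with h | h
    · exact hbne h
    · exact hc'j₀ h
  have hGne : G ≠ 0 := by
    intro h0
    apply hnumj₀
    rw [← hcoeff_e _ j₀.2, h0, MvPolynomial.coeff_zero]
  have hGsuppEr : ∀ u ∈ G.support, (u 0, u 1) ∈ Er := by
    intro u hu
    obtain ⟨e, he, rfl⟩ := hsupp u hu
    rw [hμ0, hμ1]
    rwa [Prod.mk.eta]
  have hGsupp : ∀ u ∈ G.support, (u 0, u 1) ∈ Emonomials m₁ m₂ D :=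
    fun u hu => Finset.erase_subset _ _ (hGsuppEr u hu)
  have hGvanish : ∀ pt ∈ S, MvPolynomial.eval ![pt.1, pt.2] G = 0 := by
    intro pt hpt
    apply halg_inj
    rw [map_zero]
    have hevalG : (algebraMap (𝓞 K) K) (MvPolynomial.eval ![pt.1, pt.2] G)
        = ∑ e ∈ Er, (algebraMap (𝓞 K) K (num e))
          * (algebraMap (𝓞 K) K (pt.1 ^ e.1 * pt.2 ^ e.2)) := by
      rw [hG, map_sum, map_sum]
      refine Finset.sum_congr rfl fun e _ => ?_
      rw [MvPolynomial.eval_monomial]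
      rw [pp1_finsupp_prod (μf e) ![pt.1, pt.2]]
      rw [hμ0, hμ1]
      simp only [Matrix.cons_val_zero, Matrix.cons_val_one, Matrix.head_cons]
      rw [map_mul]
    rw [hevalG]
    have hterm : ∀ e ∈ Er, (algebraMap (𝓞 K) K (num e))
        * (algebraMap (𝓞 K) K (pt.1 ^ e.1 * pt.2 ^ e.2))
        = (algebraMap (𝓞 K) K (bden : 𝓞 K))
          * (c' e * (algebraMap (𝓞 K) K) (pt.1 ^ e.1 * pt.2 ^ e.2)) := by
      intro e he
      rw [hnum_spec e he, Algebra.smul_def]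
      ring
    rw [Finset.sum_congr rfl hterm, ← Finset.mul_sum, hc'sum pt hpt, mul_zero]
  -- coprimality
  have hcop : IsRelPrime (MvPolynomial.map (algebraMap (𝓞 K) (AlgebraicClosure K)) G)
      (MvPolynomial.map (algebraMap (𝓞 K) (AlgebraicClosure K)) F) := by
    intro z hzG hzF
    by_contra hz
    have hρinj : Function.Injective (algebraMap (𝓞 K) (AlgebraicClosure K)) := by
      rw [IsScalarTower.algebraMap_eq (𝓞 K) K (AlgebraicClosure K)]
      exact (algebraMap K (AlgebraicClosure K)).injective.comp halg_inj
    have hFdvd : (MvPolynomial.map (algebraMap (𝓞 K) (AlgebraicClosure K)) F)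
        ∣ (MvPolynomial.map (algebraMap (𝓞 K) (AlgebraicClosure K)) G) := by
      obtain ⟨w, hw⟩ := hzF
      rcases hFirr.isUnit_or_isUnit hw with h | h
      · exact absurd h hz
      · have hzeq : (MvPolynomial.map (algebraMap (𝓞 K) (AlgebraicClosure K)) F)
            * ↑h.unit⁻¹ = z := by
          rw [hw, mul_assoc, IsUnit.mul_val_inv, mul_one]
        exact dvd_trans ⟨↑h.unit⁻¹, hzeq.symm⟩ hzG
    obtain ⟨Hq, hHq⟩ := hFdvd
    have hGb0 : (MvPolynomial.map (algebraMap (𝓞 K) (AlgebraicClosure K)) G) ≠ 0 := by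
      intro h0
      apply hGne
      apply MvPolynomial.map_injective _ hρinj
      rw [h0, map_zero]
    have hHne : Hq ≠ 0 := by
      intro h0
      rw [h0, mul_zero] at hHq
      exact hGb0 hHq
    have hFb0 : (MvPolynomial.map (algebraMap (𝓞 K) (AlgebraicClosure K)) F) ≠ 0 := by
      intro h0
      rw [h0, zero_mul] at hHq
      exact hGb0 hHq
    have hdeg0_mul : ∀ P Q : MvPolynomial (Fin 2) (AlgebraicClosure K), P ≠ 0 → Q ≠ 0 →
        MvPolynomial.degreeOf 0 (P * Q)
          = MvPolynomial.degreeOf 0 P + MvPolynomial.degreeOf 0 Q := by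
      intro P Q hP hQ
      rw [← MvPolynomial.natDegree_finSuccEquiv, ← MvPolynomial.natDegree_finSuccEquiv,
        ← MvPolynomial.natDegree_finSuccEquiv, map_mul]
      refine Polynomial.natDegree_mul ?_ ?_
      · intro h0
        apply hP
        apply (MvPolynomial.finSuccEquiv (AlgebraicClosure K) 1).injective
        rw [h0, map_zero]
      · intro h0
        apply hQ
        apply (MvPolynomial.finSuccEquiv (AlgebraicClosure K) 1).injective
        rw [h0, map_zero]
    have hswap : ∀ R : MvPolynomial (Fin 2) (AlgebraicClosure K),
        MvPolynomial.degreeOf 1 R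
        = MvPolynomial.degreeOf 0 (MvPolynomial.rename (Equiv.swap (0 : Fin 2) 1) R) := by
      intro R
      have h := MvPolynomial.degreeOf_rename_of_injective
        (f := (Equiv.swap (0 : Fin 2) 1)) (Equiv.injective _) (i := 1) (p := R)
      rw [Equiv.swap_apply_right] at h
      exact h.symm
    have hdeg1_mul : ∀ P Q : MvPolynomial (Fin 2) (AlgebraicClosure K), P ≠ 0 → Q ≠ 0 →
        MvPolynomial.degreeOf 1 (P * Q)
          = MvPolynomial.degreeOf 1 P + MvPolynomial.degreeOf 1 Q := by
      intro P Q hP hQ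
      rw [hswap, hswap, hswap, map_mul]
      refine hdeg0_mul _ _ ?_ ?_
      · intro h0
        apply hP
        apply MvPolynomial.rename_injective _ (Equiv.injective _)
        rw [h0, map_zero]
      · intro h0
        apply hQ
        apply MvPolynomial.rename_injective _ (Equiv.injective _)
        rw [h0, map_zero]
    have hsuppmap : (MvPolynomial.map (algebraMap (𝓞 K) (AlgebraicClosure K)) G).support
        ⊆ G.support := MvPolynomial.support_map_subset _ _
    have hdegG0 : MvPolynomial.degreeOf 0
        (MvPolynomial.map (algebraMap (𝓞 K) (AlgebraicClosure K)) G) ≤ m₁ := by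
      rw [MvPolynomial.degreeOf_le_iff]
      intro u hu
      have h := hGsuppEr u (hsuppmap hu)
      have h2 := Finset.erase_subset _ _ h
      rw [hmemE] at h2
      exact h2.1
    have hdegG1 : MvPolynomial.degreeOf 1
        (MvPolynomial.map (algebraMap (𝓞 K) (AlgebraicClosure K)) G) ≤ m₂ := by
      rw [MvPolynomial.degreeOf_le_iff]
      intro u hu
      have h := hGsuppEr u (hsuppmap hu)
      have h2 := Finset.erase_subset _ _ h
      rw [hmemE] at h2
      exact h2.2
    have hcoeffF : (MvPolynomial.map (algebraMap (𝓞 K) (AlgebraicClosure K)) F).coeff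
        (μf (m₁, m₂)) ≠ 0 := by
      rw [MvPolynomial.coeff_map]
      intro h0
      apply hcoeff
      apply hρinj
      rw [map_zero]
      exact h0
    have hmemF : μf (m₁, m₂) ∈
        (MvPolynomial.map (algebraMap (𝓞 K) (AlgebraicClosure K)) F).support :=
      MvPolynomial.mem_support_iff.2 hcoeffF
    have hdegF0 : m₁ ≤ MvPolynomial.degreeOf 0
        (MvPolynomial.map (algebraMap (𝓞 K) (AlgebraicClosure K)) F) := by
      have h := MvPolynomial.monomial_le_degreeOf 0 hmemF
      rwa [hμ0] at h
    have hdegF1 : m₂ ≤ MvPolynomial.degreeOf 1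
        (MvPolynomial.map (algebraMap (𝓞 K) (AlgebraicClosure K)) F) := by
      have h := MvPolynomial.monomial_le_degreeOf 1 hmemF
      rwa [hμ1] at h
    have hH0deg : MvPolynomial.degreeOf 0 Hq = 0 := by
      have h := hdeg0_mul _ _ hFb0 hHne
      rw [← hHq] at h
      omega
    have hH1deg : MvPolynomial.degreeOf 1 Hq = 0 := by
      have h := hdeg1_mul _ _ hFb0 hHne
      rw [← hHq] at h
      omega
    have hHsupp : ∀ u ∈ Hq.support, u = 0 := by
      intro u hu
      have h0 : u 0 = 0 := by
        have h := MvPolynomial.monomial_le_degreeOf 0 hu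
        omega
      have h1 : u 1 = 0 := by
        have h := MvPolynomial.monomial_le_degreeOf 1 hu
        omega
      ext i
      fin_cases i
      · exact h0
      · exact h1
    have hHc0 : Hq.coeff 0 ≠ 0 := by
      have hne : Hq.support.Nonempty := by
        rw [Finset.nonempty_iff_ne_empty, Ne, MvPolynomial.support_eq_empty]
        exact hHne
      obtain ⟨u, hu⟩ := hne
      have h := hHsupp u hu
      rw [h] at hu
      exact MvPolynomial.mem_support_iff.1 hu
    have hcoeffG0 : (MvPolynomial.map (algebraMap (𝓞 K) (AlgebraicClosure K)) G).coeff
        (μf (m₁, m₂)) = 0 := by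
      rw [MvPolynomial.coeff_map]
      have h : G.coeff (μf (m₁, m₂)) = 0 := by
        by_contra h
        have hmm2 := hGsuppEr _ (MvPolynomial.mem_support_iff.2 h)
        rw [hμ0, hμ1] at hmm2
        exact Finset.notMem_erase _ _ hmm2
      rw [h, map_zero]
    have hfinal : (MvPolynomial.map (algebraMap (𝓞 K) (AlgebraicClosure K)) G).coeff
        (μf (m₁, m₂))
        = (MvPolynomial.map (algebraMap (𝓞 K) (AlgebraicClosure K)) F).coeff (μf (m₁, m₂))
          * Hq.coeff 0 := by
      rw [hHq, MvPolynomial.coeff_mul]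
      rw [Finset.sum_eq_single (μf (m₁, m₂), 0)]
      · intro ab hab hne
        by_cases hb : ab.2 = 0
        · exfalso
          apply hne
          rw [Finset.HasAntidiagonal.mem_antidiagonal] at hab
          rw [hb, add_zero] at hab
          rw [← hab, ← hb]
        · have h : Hq.coeff ab.2 = 0 := by
            by_contra hcc
            exact hb (hHsupp ab.2 (MvPolynomial.mem_support_iff.2 hcc))
          rw [h, mul_zero]
      · intro h
        exfalso
        exact h (Finset.HasAntidiagonal.mem_antidiagonal.2 (add_zero _))
    rw [hcoeffG0] at hfinal
    exact (mul_ne_zero hcoeffF hHc0) hfinal.symm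
  exact ⟨G, hGne, hGsupp, hGvanish, hcop⟩
end

section
/- Let F(X₁,X₂) ∈ O_K[X₁,X₂] be of total degree d, monic as a polynomial in X₂, irreducible in K[X₁,X₂] but not irreducible in K̄[X₁,X₂] (i.e., not absolutely irreducible). Then the set of all (x₁,x₂) ∈ O_K² with F(x₁,x₂) = 0 has cardinality at most 4d⁴; in particular N(F,B) ≤ 4d⁴ for every B. -/
open NumberField Polynomial

/-- The total degree of a polynomial in two variables `X₁, X₂`, represented as a polynomial
in `X₂` whose coefficients are polynomials in `X₁`. -/
noncomputable def totalDeg {R : Type*} [Semiring R] (F : Polynomial (Polynomial R)) : ℕ :=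
  F.support.sup fun i => i + (F.coeff i).natDegree

/-- Evaluation of a two-variable polynomial (inner variable `X₁`, outer variable `X₂`)
at the point `(x₁, x₂)`. -/
noncomputable def evalTwo {R : Type*} [CommSemiring R] (F : Polynomial (Polynomial R)) (x₁ x₂ : R) : R :=
  Polynomial.eval₂ (Polynomial.evalRingHom x₁) x₂ F

section Sylvester

open Finset

variable {R : Type*} [CommRing R]

/-- Sylvester-style matrix for `f` (formal degree `n`) and `g` (formal degree `m`). -/
noncomputable def syl (f g : R[X]) (m n : ℕ) : Matrix (Fin (m+n)) (Fin (m+n)) R :=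
  fun i j =>
    if (j:ℕ) < m then (if (j:ℕ) ≤ (i:ℕ) then f.coeff ((i:ℕ) - (j:ℕ)) else 0)
    else (if (j:ℕ) - m ≤ (i:ℕ) then g.coeff ((i:ℕ) - ((j:ℕ) - m)) else 0)

noncomputable def polyA (m n : ℕ) (v : Fin (m+n) → R) : R[X] :=
  ∑ j : Fin (m+n), if (j:ℕ) < m then C (v j) * X^(j:ℕ) else 0

noncomputable def polyB (m n : ℕ) (v : Fin (m+n) → R) : R[X] :=
  ∑ j : Fin (m+n), if (j:ℕ) < m then 0 else C (v j) * X^((j:ℕ) - m)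

theorem syl_mulVec (f g : R[X]) (m n : ℕ) (v : Fin (m+n) → R) (i : Fin (m+n)) :
    (polyA m n v * f + polyB m n v * g).coeff (i:ℕ) = (syl f g m n).mulVec v i := by
  rw [Matrix.mulVec, dotProduct]
  rw [polyA, polyB, Finset.sum_mul, Finset.sum_mul, ← Finset.sum_add_distrib,
    finset_sum_coeff]
  refine Finset.sum_congr rfl fun j _ => ?_
  by_cases hj : (j:ℕ) < m
  · simp only [syl, hj, if_true, coeff_add, zero_mul, coeff_zero, add_zero]
    have : C (v j) * X^(j:ℕ) * f = v j • (f * X^(j:ℕ)) := by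
      rw [smul_eq_C_mul]; ring
    rw [this, coeff_smul, coeff_mul_X_pow', smul_eq_mul]
    split_ifs <;> ring
  · simp only [syl, hj, if_false, coeff_add, zero_mul, coeff_zero, zero_add]
    have : C (v j) * X^((j:ℕ)-m) * g = v j • (g * X^((j:ℕ)-m)) := by
      rw [smul_eq_C_mul]; ring
    rw [this, coeff_smul, coeff_mul_X_pow', smul_eq_mul]
    split_ifs <;> ring

theorem polyA_coeff (m n : ℕ) (v : Fin (m+n) → R) (j : Fin (m+n)) (hj : (j:ℕ) < m) :
    (polyA m n v).coeff (j:ℕ) = v j := by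
  rw [polyA, finset_sum_coeff]
  rw [Finset.sum_eq_single j]
  · simp [hj, coeff_C_mul, coeff_X_pow]
  · intro j' _ hne
    by_cases h : (j':ℕ) < m
    · simp only [h, if_true, coeff_C_mul, coeff_X_pow]
      rw [if_neg (by simpa [Fin.ext_iff] using fun hh => hne (Fin.ext hh.symm))]
      simp
    · simp [h]
  · simp

theorem polyB_coeff (m n : ℕ) (v : Fin (m+n) → R) (j : Fin (m+n)) (hj : m ≤ (j:ℕ)) :
    (polyB m n v).coeff ((j:ℕ) - m) = v j := by
  rw [polyB, finset_sum_coeff]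
  rw [Finset.sum_eq_single j]
  · simp [Nat.not_lt.mpr hj, coeff_C_mul, coeff_X_pow]
  · intro j' _ hne
    by_cases h : (j':ℕ) < m
    · simp [h]
    · simp only [h, if_false, coeff_C_mul, coeff_X_pow]
      rw [if_neg (fun hh => hne (Fin.ext (by omega)))]
      simp
  · simp

theorem polyA_degree_lt (m n : ℕ) (v : Fin (m+n) → R) :
    (polyA m n v).degree < (m : WithBot ℕ) ∨ polyA m n v = 0 := by
  by_cases hm : 0 < m
  · left
    refine lt_of_le_of_lt (Polynomial.degree_sum_le _ _) ?_
    rw [Finset.sup_lt_iff (by exact_mod_cast WithBot.bot_lt_coe m)]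
    intro j _
    by_cases h : (j:ℕ) < m
    · simp only [h, if_true]
      exact lt_of_le_of_lt (Polynomial.degree_C_mul_X_pow_le _ _) (by exact_mod_cast h)
    · simp only [h, if_false, Polynomial.degree_zero]
      exact_mod_cast WithBot.bot_lt_coe m
  · right
    rw [polyA]
    refine Finset.sum_eq_zero fun j _ => by simp [show ¬ (j:ℕ) < m by omega]

theorem polyB_degree_lt (m n : ℕ) (v : Fin (m+n) → R) :
    (polyB m n v).degree < (n : WithBot ℕ) ∨ polyB m n v = 0 := by
  by_cases hn : 0 < n
  · left
    refine lt_of_le_of_lt (Polynomial.degree_sum_le _ _) ?_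
    rw [Finset.sup_lt_iff (by exact_mod_cast WithBot.bot_lt_coe n)]
    intro j _
    by_cases h : (j:ℕ) < m
    · simp only [h, if_true, Polynomial.degree_zero]
      exact_mod_cast WithBot.bot_lt_coe n
    · simp only [h, if_false]
      refine lt_of_le_of_lt (Polynomial.degree_C_mul_X_pow_le _ _) ?_
      have : (j:ℕ) - m < n := by omega
      exact_mod_cast this
  · right
    rw [polyB]
    refine Finset.sum_eq_zero fun j _ => ?_
    have hjm : (j:ℕ) < m := by have := j.isLt; omega
    simp [hjm]

theorem col_sum_eq (p : R[X]) (N c : ℕ) (hp : p.natDegree < N - c) :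
    ∑ i ∈ Finset.range N, (if c ≤ i then (C (p.coeff (i - c)) * X^i : R[X]) else 0)
      = X^c * p := by
  rw [Finset.sum_ite, Finset.sum_const_zero, add_zero]
  have hfil : (Finset.range N).filter (fun i => c ≤ i) = Finset.Ico c N := by
    ext i; simp [Finset.mem_filter, Finset.mem_Ico, and_comm]
  rw [hfil, Finset.sum_Ico_eq_sum_range]
  have : ∀ k ∈ Finset.range (N - c), (C (p.coeff (c + k - c)) * X^(c + k) : R[X])
      = X^c * (C (p.coeff k) * X^k) := by
    intro k _
    rw [Nat.add_sub_cancel_left, pow_add]; ring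
  rw [Finset.sum_congr rfl this, ← Finset.mul_sum]
  congr 1
  calc ∑ k ∈ Finset.range (N - c), (C (p.coeff k) * X^k : R[X])
      = ∑ k ∈ Finset.range (N - c), (monomial k) (p.coeff k) :=
        Finset.sum_congr rfl fun k _ => C_mul_X_pow_eq_monomial
    _ = p := (p.as_sum_range' (N - c) hp).symm

theorem syl_vecMul (f g : R[X]) (m n : ℕ) (hf : f.natDegree ≤ n) (hg : g.natDegree ≤ m) :
    Matrix.vecMul (fun i : Fin (m+n) => (X:R[X])^(i:ℕ)) ((syl f g m n).map C)
      = fun j : Fin (m+n) =>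
          if (j:ℕ) < m then X^(j:ℕ) * f else X^((j:ℕ)-m) * g := by
  funext j
  rw [Matrix.vecMul, dotProduct]
  by_cases hj : (j:ℕ) < m
  · simp only [Matrix.map_apply, syl, hj, if_true]
    have : ∀ i : Fin (m+n), (X:R[X])^(i:ℕ) * C (if (j:ℕ) ≤ (i:ℕ) then f.coeff ((i:ℕ)-(j:ℕ)) else 0)
        = if (j:ℕ) ≤ (i:ℕ) then C (f.coeff ((i:ℕ)-(j:ℕ))) * X^(i:ℕ) else 0 := by
      intro i; split_ifs
      · ring
      · simp
    rw [Finset.sum_congr rfl fun i _ => this i, Fin.sum_univ_eq_sum_range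
      (fun i => if (j:ℕ) ≤ i then C (f.coeff (i-(j:ℕ))) * X^i else 0)]
    exact col_sum_eq f (m+n) j (by omega)
  · simp only [Matrix.map_apply, syl, hj, if_false]
    have : ∀ i : Fin (m+n), (X:R[X])^(i:ℕ) * C (if (j:ℕ)-m ≤ (i:ℕ) then g.coeff ((i:ℕ)-((j:ℕ)-m)) else 0)
        = if (j:ℕ)-m ≤ (i:ℕ) then C (g.coeff ((i:ℕ)-((j:ℕ)-m))) * X^(i:ℕ) else 0 := by
      intro i; split_ifs
      · ring
      · simp
    rw [Finset.sum_congr rfl fun i _ => this i, Fin.sum_univ_eq_sum_range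
      (fun i => if (j:ℕ)-m ≤ i then C (g.coeff (i-((j:ℕ)-m))) * X^i else 0)]
    refine col_sum_eq g (m+n) ((j:ℕ)-m) (by omega)

theorem syl_det_bezout (f g : R[X]) (m n : ℕ) (hf : f.natDegree ≤ n) (hg : g.natDegree ≤ m)
    (hpos : 0 < m + n) :
    ∃ a b : R[X], a * f + b * g = C ((syl f g m n).det) := by
  classical
  set M' := (syl f g m n).map (C : R → R[X]) with hM'
  set w : Fin (m+n) → R[X] := fun i => X^(i:ℕ) with hw
  set j0 : Fin (m+n) := ⟨0, hpos⟩ with hj0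
  have key : Matrix.vecMul (Matrix.vecMul w M') M'.adjugate j0
      = Matrix.vecMul w (M' * M'.adjugate) j0 := by
    rw [Matrix.vecMul_vecMul]
  rw [Matrix.mul_adjugate] at key
  have hdet : M'.det = C ((syl f g m n).det) := ((C : R →+* R[X]).map_det _).symm
  have rhs : Matrix.vecMul w (M'.det • (1 : Matrix (Fin (m+n)) (Fin (m+n)) R[X])) j0
      = C ((syl f g m n).det) := by
    rw [← hdet]
    simp [Matrix.vecMul, dotProduct, Matrix.smul_apply, Matrix.one_apply, hw, hj0,
      mul_ite, Finset.sum_ite_eq']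
  rw [rhs] at key
  rw [syl_vecMul f g m n hf hg] at key
  refine ⟨∑ i : Fin (m+n), if (i:ℕ) < m then X^(i:ℕ) * M'.adjugate i j0 else 0,
    ∑ i : Fin (m+n), if (i:ℕ) < m then 0 else X^((i:ℕ)-m) * M'.adjugate i j0, ?_⟩
  rw [← key, Matrix.vecMul, dotProduct, Finset.sum_mul, Finset.sum_mul,
    ← Finset.sum_add_distrib]
  refine Finset.sum_congr rfl fun i _ => ?_
  by_cases hi : (i:ℕ) < m
  · simp only [hi, if_true, zero_mul, add_zero]; ring
  · simp only [hi, if_false, zero_mul, zero_add]; ring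

theorem natDegree_det_le {K : Type*} [CommRing K] {k t : ℕ}
    (M : Matrix (Fin k) (Fin k) (Polynomial K))
    (h : ∀ i j, (M i j).natDegree ≤ t) : (M.det).natDegree ≤ k * t := by
  rw [Matrix.det_apply']
  refine le_trans (Polynomial.natDegree_sum_le _ _) ?_
  rw [Finset.fold_max_le]
  refine ⟨Nat.zero_le _, fun σ _ => ?_⟩
  simp only [Function.comp]
  refine le_trans (Polynomial.natDegree_mul_le) ?_
  have h1 : (((Equiv.Perm.sign σ : ℤ) : Polynomial K)).natDegree = 0 :=
    Polynomial.natDegree_intCast _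
  rw [h1, zero_add]
  refine le_trans (Polynomial.natDegree_prod_le _ _) ?_
  calc ∑ i : Fin k, (M (σ i) i).natDegree ≤ ∑ _i : Fin k, t :=
        Finset.sum_le_sum fun i _ => h _ _
    _ = k * t := by simp [Finset.sum_const, mul_comm]

theorem degree_lt_of_lt_or_zero {p : R[X]} {m : ℕ}
    (h : p.degree < (m : WithBot ℕ) ∨ p = 0) : p.degree < (m : WithBot ℕ) := by
  rcases h with h | h
  · exact h
  · rw [h, Polynomial.degree_zero]; exact WithBot.bot_lt_coe m

theorem degree_mul_lt_aux {L : Type*} [Field L] {p q : L[X]} {m n : ℕ}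
    (hp : p.degree < (m : WithBot ℕ)) (hq : q.natDegree ≤ n) :
    (p * q).degree < ((m + n : ℕ) : WithBot ℕ) := by
  rcases eq_or_ne p 0 with h0 | h0
  · rw [h0, zero_mul, Polynomial.degree_zero]; exact WithBot.bot_lt_coe _
  rcases eq_or_ne q 0 with h1 | h1
  · rw [h1, mul_zero, Polynomial.degree_zero]; exact WithBot.bot_lt_coe _
  rw [Polynomial.degree_mul, Polynomial.degree_eq_natDegree h0,
    Polynomial.degree_eq_natDegree h1]
  have hpm : p.natDegree < m := (Polynomial.natDegree_lt_iff_degree_lt h0).2 hp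
  exact_mod_cast Nat.add_lt_add_of_lt_of_le hpm hq

theorem syl_det_ne_zero {L : Type*} [Field L] (f g : L[X]) (m n : ℕ)
    (hf : f.natDegree = n) (hg : g.natDegree ≤ m) (hn : 0 < n)
    (hcop : IsCoprime f g) : (syl f g m n).det ≠ 0 := by
  intro hdet
  obtain ⟨v, hv, hmv⟩ := (Matrix.exists_mulVec_eq_zero_iff.2 hdet)
  have hf0 : f ≠ 0 := fun h0 => by simp [h0] at hf; omega
  have hdegaf : (polyA m n v * f).degree < ((m + n : ℕ) : WithBot ℕ) := by
    have := degree_lt_of_lt_or_zero (polyA_degree_lt m n v)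
    exact degree_mul_lt_aux this (le_of_eq hf)
  have hdegbg : (polyB m n v * g).degree < ((m + n : ℕ) : WithBot ℕ) := by
    have := degree_lt_of_lt_or_zero (polyB_degree_lt m n v)
    have h2 := degree_mul_lt_aux this hg
    convert h2 using 2
    omega
  have hsum : polyA m n v * f + polyB m n v * g = 0 := by
    ext i
    rcases lt_or_ge i (m + n) with hi | hi
    · rw [syl_mulVec f g m n v ⟨i, hi⟩, hmv]; rfl
    · refine Polynomial.coeff_eq_zero_of_degree_lt ?_
      refine lt_of_le_of_lt (Polynomial.degree_add_le _ _)
        (lt_of_lt_of_le (max_lt hdegaf hdegbg) (by exact_mod_cast hi))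
  have hdvd : f ∣ polyB m n v * g := ⟨-(polyA m n v), by linear_combination hsum⟩
  have hfb : f ∣ polyB m n v := hcop.dvd_of_dvd_mul_right hdvd
  have hbz : polyB m n v = 0 := by
    by_contra hb0
    have := Polynomial.natDegree_le_of_dvd hfb hb0
    have hdb : (polyB m n v).natDegree < n :=
      (Polynomial.natDegree_lt_iff_degree_lt hb0).2
        (degree_lt_of_lt_or_zero (polyB_degree_lt m n v))
    omega
  have haz : polyA m n v = 0 := by
    rw [hbz, zero_mul, add_zero] at hsum
    rcases mul_eq_zero.1 hsum with h | h
    · exact h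
    · exact absurd h hf0
  refine hv ?_
  funext j
  rcases lt_or_ge (j:ℕ) m with hj | hj
  · rw [← polyA_coeff m n v j hj, haz]; rfl
  · rw [← polyB_coeff m n v j hj, hbz]; rfl

end Sylvester

theorem evalTwo_map' {R S : Type*} [CommRing R] [CommRing S] (j : R →+* S)
    (p : Polynomial (Polynomial R)) (x₁ x₂ : R) :
    Polynomial.eval₂ (Polynomial.evalRingHom (j x₁)) (j x₂)
        (p.map (Polynomial.mapRingHom j)) =
      j (Polynomial.eval₂ (Polynomial.evalRingHom x₁) x₂ p) := by
  rw [Polynomial.eval₂_map, Polynomial.hom_eval₂]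
  congr 1
  refine RingHom.ext fun q => ?_
  simp only [RingHom.comp_apply, Polynomial.coe_evalRingHom, Polynomial.coe_mapRingHom]
  rw [Polynomial.eval_map, Polynomial.eval₂_at_apply]

theorem fixed_mem_range {K : Type*} [Field K] [CharZero K] (x : AlgebraicClosure K)
    (h : ∀ σ : AlgebraicClosure K ≃ₐ[K] AlgebraicClosure K, σ x = x) :
    x ∈ (algebraMap K (AlgebraicClosure K)).range := by
  have hint : IsIntegral K x := Algebra.IsIntegral.isIntegral x
  have hirr : Irreducible (minpoly K x) := minpoly.irreducible hint
  have hsep : (minpoly K x).Separable := hirr.separable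
  have hsplit : Polynomial.Splits ((minpoly K x).map (algebraMap K (AlgebraicClosure K))) :=
    IsAlgClosed.splits _
  have hcard : Fintype.card ((minpoly K x).rootSet (AlgebraicClosure K)) =
      (minpoly K x).natDegree :=
    Polynomial.card_rootSet_eq_natDegree hsep hsplit
  rw [← minpoly.degree_eq_one_iff]
  by_contra hdeg
  have hdpos : 0 < (minpoly K x).natDegree := minpoly.natDegree_pos hint
  have hne1 : (minpoly K x).natDegree ≠ 1 := fun h1 =>
    hdeg ((Polynomial.degree_eq_iff_natDegree_eq (minpoly.ne_zero hint)).2 h1)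
  have hxmem : x ∈ (minpoly K x).rootSet (AlgebraicClosure K) := by
    rw [Polynomial.mem_rootSet]
    exact ⟨minpoly.ne_zero hint, minpoly.aeval K x⟩
  have h1lt : 1 < Fintype.card ((minpoly K x).rootSet (AlgebraicClosure K)) := by
    rw [hcard]; omega
  obtain ⟨⟨y, hy⟩, hyx⟩ := Fintype.exists_ne_of_one_lt_card h1lt
    (⟨x, hxmem⟩ : (minpoly K x).rootSet (AlgebraicClosure K))
  have hyne : y ≠ x := fun he => hyx (Subtype.ext he)
  have hyev : (Polynomial.aeval y) (minpoly K x) = 0 := (Polynomial.mem_rootSet.1 hy).2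
  obtain ⟨σ, hσ⟩ := minpoly.exists_algEquiv_of_root' (Algebra.IsAlgebraic.isAlgebraic x) hyev
  exact hyne (by rw [← hσ]; exact h σ)
theorem deriv_vanish {K : Type*} [Field K] [CharZero K] (Fk : Polynomial (Polynomial K))
    (hmonic : Fk.Monic) (hdeg : 1 ≤ Fk.natDegree) (hirr : Irreducible Fk)
    (hnotabs : ¬ Irreducible (Fk.map (mapRingHom (algebraMap K (AlgebraicClosure K)))))
    (x₁ x₂ : K) (hv : eval₂ (evalRingHom x₁) x₂ Fk = 0) :
    eval₂ (evalRingHom x₁) x₂ (Fk.derivative) = 0 := by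
  classical
  set Ω := AlgebraicClosure K with hΩ
  set j : K →+* Ω := algebraMap K Ω with hj
  have hjinj : Function.Injective j := j.injective
  set jp : Polynomial K →+* Polynomial Ω := mapRingHom j with hjp
  set Fbar : Polynomial (Polynomial Ω) := Fk.map jp with hFbar
  set y₁ : Ω := j x₁ with hy₁
  set y₂ : Ω := j x₂ with hy₂
  set ψ : Polynomial (Polynomial Ω) →+* Ω := eval₂RingHom (evalRingHom y₁) y₂ with hψ
  have hψFbar : ψ Fbar = 0 := by
    show eval₂ (evalRingHom (j x₁)) (j x₂) (Fk.map (mapRingHom j)) = 0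
    rw [evalTwo_map' j Fk x₁ x₂, hv, map_zero]
  have hFbarmonic : Fbar.Monic := hmonic.map jp
  have hFbardeg : Fbar.natDegree = Fk.natDegree := hmonic.natDegree_map jp
  have hFbarne : Fbar ≠ 0 := hFbarmonic.ne_zero
  have hFbarnotunit : ¬ IsUnit Fbar := by
    intro hu
    have := Polynomial.natDegree_eq_zero_of_isUnit hu
    omega
  -- choose an irreducible factor vanishing at the point
  obtain ⟨G₀, hG₀mem, hψG₀⟩ : ∃ G₀ ∈ UniqueFactorizationMonoid.factors Fbar, ψ G₀ = 0 := by
    obtain ⟨u, hu⟩ := (UniqueFactorizationMonoid.factors_prod hFbarne)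
    have : ψ ((UniqueFactorizationMonoid.factors Fbar).prod) * ψ (u : Polynomial (Polynomial Ω)) = 0 := by
      rw [← map_mul, hu, hψFbar]
    have hune : ψ (u : Polynomial (Polynomial Ω)) ≠ 0 := by
      have : IsUnit (ψ (u : Polynomial (Polynomial Ω))) := (Units.isUnit u).map ψ
      exact this.ne_zero
    have hprod : ψ ((UniqueFactorizationMonoid.factors Fbar).prod) = 0 :=
      by_contra fun h => (mul_ne_zero h hune) this
    rw [← Multiset.prod_hom _ ψ] at hprod
    have h0mem := Multiset.prod_eq_zero_iff.1 hprod
    obtain ⟨G₀, hG₀, hψG₀⟩ := Multiset.mem_map.1 h0mem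
    exact ⟨G₀, hG₀, hψG₀⟩
  have hG₀irr : Irreducible G₀ := UniqueFactorizationMonoid.irreducible_of_factor _ hG₀mem
  have hG₀dvd : G₀ ∣ Fbar := UniqueFactorizationMonoid.dvd_of_mem_factors hG₀mem
  -- normalize to a monic irreducible factor G with ψ G = 0
  obtain ⟨H, hH⟩ := id hG₀dvd
  have hlc : G₀.leadingCoeff * H.leadingCoeff = 1 := by
    rw [← Polynomial.leadingCoeff_mul, ← hH, hFbarmonic.leadingCoeff]
  have hlcunit : IsUnit G₀.leadingCoeff := IsUnit.of_mul_eq_one _ hlc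
  obtain ⟨u, hu⟩ := hlcunit
  set w : Polynomial Ω := ((u⁻¹ : (Polynomial Ω)ˣ) : Polynomial Ω) with hw
  set G : Polynomial (Polynomial Ω) := C w * G₀ with hG
  have hGassoc : Associated G₀ G := by
    refine ⟨(Polynomial.isUnit_C.2 (u⁻¹).isUnit).unit, ?_⟩
    simp [hG, hw, mul_comm]
  have hGirr : Irreducible G := hGassoc.irreducible hG₀irr
  have hGmonic : G.Monic := by
    have : G.leadingCoeff = w * G₀.leadingCoeff := by
      rw [hG, Polynomial.leadingCoeff_mul, Polynomial.leadingCoeff_C]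
    rw [Polynomial.Monic, this, hw, ← hu]
    exact u.inv_mul
  have hψG : ψ G = 0 := by rw [hG, map_mul, hψG₀, mul_zero]
  have hGdvd : G ∣ Fbar := (hGassoc.symm.dvd).trans hG₀dvd
  have hGdegpos : 1 ≤ G.natDegree := by
    by_contra h
    have h0 : G.natDegree = 0 := by omega
    exact hGirr.not_isUnit (hGmonic.natDegree_eq_zero.1 h0 ▸ isUnit_one)
  -- Galois action
  by_cases hfix : ∀ σ : Ω ≃ₐ[K] Ω, G.map (mapRingHom (σ : Ω →+* Ω)) = G
  · -- G is defined over K : contradiction with irreducibility of Fk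
    exfalso
    have hcoe : ∀ i l, (G.coeff i).coeff l ∈ j.range := by
      intro i l
      refine fixed_mem_range _ fun σ => ?_
      have hc := congrArg (fun p => ((p.coeff i).coeff l)) (hfix σ)
      simpa [Polynomial.coeff_map] using hc
    have hmem : G ∈ Polynomial.lifts (mapRingHom j) := by
      rw [Polynomial.lifts_iff_coeff_lifts]
      intro i
      have : G.coeff i ∈ Polynomial.lifts j := by
        rw [Polynomial.lifts_iff_coeff_lifts]
        intro l
        exact hcoe i l
      obtain ⟨q, hq⟩ := (Polynomial.mem_lifts _).1 this
      exact ⟨q, hq⟩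
    obtain ⟨Gk, hGk⟩ := (Polynomial.mem_lifts _).1 hmem
    have hjpinj : Function.Injective jp := Polynomial.map_injective j hjinj
    have hmapinj : Function.Injective (Polynomial.map jp) := Polynomial.map_injective jp hjpinj
    have hGkmonic : Gk.Monic := by
      have hdegeq : Gk.natDegree = G.natDegree := by
        rw [← hGk]; exact (Polynomial.natDegree_map_eq_of_injective hjpinj Gk).symm
      have h2 : jp (Gk.coeff Gk.natDegree) = 1 := by
        have h3 := congrArg (fun p => p.coeff Gk.natDegree) hGk
        simp only [Polynomial.coeff_map] at h3
        rw [h3, hdegeq]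
        exact hGmonic
      apply hjpinj
      show jp (Gk.coeff Gk.natDegree) = jp 1
      rw [h2, map_one]
    have hGkdvd : Gk ∣ Fk := by
      rw [← Polynomial.modByMonic_eq_zero_iff_dvd hGkmonic]
      apply hmapinj
      rw [Polynomial.map_modByMonic _ hGkmonic, Polynomial.map_zero, hGk, ← hFbar,
        Polynomial.modByMonic_eq_zero_iff_dvd hGmonic]
      exact hGdvd
    obtain ⟨Q, hQ⟩ := hGkdvd
    rcases hirr.isUnit_or_isUnit hQ with hu | hu
    · have : Gk.natDegree = 0 := Polynomial.natDegree_eq_zero_of_isUnit hu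
      have : G.natDegree = 0 := by
        rw [← hGk, Polynomial.natDegree_map_eq_of_injective hjpinj, this]
      omega
    · refine hnotabs ?_
      have hassoc : Associated G Fbar := by
        refine ⟨((hu.map (Polynomial.mapRingHom jp)).unit), ?_⟩
        rw [IsUnit.unit_spec, Polynomial.coe_mapRingHom, hFbar, hQ, Polynomial.map_mul, hGk]
      exact hassoc.irreducible hGirr
  · push_neg at hfix
    obtain ⟨σ, hσne⟩ := hfix
    set σr : Ω →+* Ω := (σ : Ω →+* Ω) with hσr
    set Gσ : Polynomial (Polynomial Ω) := G.map (mapRingHom σr) with hGσ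
    have hσj : σr.comp j = j := RingHom.ext fun a => σ.commutes a
    have hFbarfix : Fbar.map (mapRingHom σr) = Fbar := by
      rw [hFbar, hjp, Polynomial.map_map, Polynomial.mapRingHom_comp, hσj]
    have hGσdvd : Gσ ∣ Fbar := by
      rw [← hFbarfix]
      exact Polynomial.map_dvd _ hGdvd
    have hGσmonic : Gσ.Monic := hGmonic.map _
    have hGσirr : Irreducible Gσ := by
      have he2 : (↑(Polynomial.mapEquiv σ.toRingEquiv) : Polynomial Ω →+* Polynomial Ω)
          = mapRingHom σr := by
        refine RingHom.ext fun p => ?_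
        rfl
      have : Gσ = (Polynomial.mapEquiv (Polynomial.mapEquiv σ.toRingEquiv)) G := by
        rw [Polynomial.mapEquiv_apply, he2, hGσ]
      rw [this]
      exact (MulEquiv.irreducible_iff _).2 hGirr
    have hψGσ : ψ Gσ = 0 := by
      have : ψ Gσ = σr (ψ G) := by
        show eval₂ (evalRingHom y₁) y₂ (G.map (mapRingHom σr)) = _
        have h1 : y₁ = σr (y₁) := (σ.commutes x₁).symm
        have h2 : y₂ = σr (y₂) := (σ.commutes x₂).symm
        rw [h1, h2]
        exact evalTwo_map' σr G y₁ y₂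
      rw [this, hψG, map_zero]
    have hnotassoc : ¬ Associated G Gσ := by
      intro ha
      exact hσne (Polynomial.eq_of_monic_of_associated hGσmonic hGmonic ha.symm)
    -- G * Gσ divides Fbar
    obtain ⟨t, ht⟩ := id hGdvd
    have hGσprime : Prime Gσ := hGσirr.prime
    have hGσt : Gσ ∣ t := by
      rcases (hGσprime.2.2 G t (ht ▸ hGσdvd)) with h | h
      · exact absurd (hGσirr.associated_of_dvd hGirr h).symm hnotassoc
      · exact h
    have hmuldvd : G * Gσ ∣ Fbar := by
      rw [ht]
      exact mul_dvd_mul_left G hGσt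
    -- specialize X₁ := y₁
    set ρ : Polynomial (Polynomial Ω) →+* Polynomial Ω := mapRingHom (evalRingHom y₁) with hρ
    have hroot : ∀ p : Polynomial (Polynomial Ω), ψ p = 0 → (X - C y₂) ∣ ρ p := by
      intro p hp
      rw [Polynomial.dvd_iff_isRoot]
      show (p.map (evalRingHom y₁)).eval y₂ = 0
      rw [Polynomial.eval_map]
      exact hp
    have hsq : (X - C y₂) * (X - C y₂) ∣ ρ Fbar := by
      refine dvd_trans (mul_dvd_mul (hroot G hψG) (hroot Gσ hψGσ)) ?_
      rw [← map_mul]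
      exact map_dvd ρ hmuldvd
    obtain ⟨r, hr⟩ := hsq
    have hderiv : (ρ Fbar).derivative.eval y₂ = 0 := by
      rw [hr]
      simp [Polynomial.derivative_mul, Polynomial.derivative_sub]
    -- transport back
    have hfinal : j (eval₂ (evalRingHom x₁) x₂ (Fk.derivative)) = 0 := by
      rw [← evalTwo_map' j (Fk.derivative) x₁ x₂]
      have h1 : (Fk.derivative).map (mapRingHom j) = Fbar.derivative := by
        rw [hFbar, Polynomial.derivative_map]
      rw [h1]
      show eval₂ (evalRingHom y₁) y₂ Fbar.derivative = 0
      rw [← Polynomial.eval_map, ← Polynomial.derivative_map]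
      exact hderiv
    apply hjinj
    rw [hfinal, map_zero]

open Polynomial in
/-- If `F ∈ O_K[X₁,X₂]` of total degree `d` is monic in `X₂`, irreducible in `K[X₁,X₂]` but
not absolutely irreducible, then `F` has at most `4d⁴` zeros in `O_K²` (in particular
`N(F,B) ≤ 4d⁴` for every `B`). -/
theorem not_absolutely_irreducible_card_zeros (K : Type*) [Field K] [NumberField K]
    (F : Polynomial (Polynomial (𝓞 K)))
    (hmonic : F.Monic)
    (hirr : Irreducible (F.map (Polynomial.mapRingHom (algebraMap (𝓞 K) K))))
    (hnotabs : ¬ Irreducible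
      (F.map (Polynomial.mapRingHom (algebraMap (𝓞 K) (AlgebraicClosure K))))) :
    {x : 𝓞 K × 𝓞 K | evalTwo F x.1 x.2 = 0}.Finite ∧
    {x : 𝓞 K × 𝓞 K | evalTwo F x.1 x.2 = 0}.ncard ≤ 4 * (totalDeg F) ^ 4 := by
  classical
  set ι : 𝓞 K →+* K := algebraMap (𝓞 K) K with hι
  have hιinj : Function.Injective ι := IsFractionRing.injective (𝓞 K) K
  set Fk : Polynomial (Polynomial K) := F.map (Polynomial.mapRingHom ι) with hFk
  have hFkmonic : Fk.Monic := hmonic.map _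
  have hn1 : 1 ≤ Fk.natDegree := by
    by_contra h
    have h0 : Fk.natDegree = 0 := by omega
    exact hirr.not_isUnit (hFkmonic.natDegree_eq_zero.1 h0 ▸ isUnit_one)
  set n : ℕ := Fk.natDegree with hn
  set d : ℕ := totalDeg F with hd
  have hnF : F.natDegree = n := (hmonic.natDegree_map _).symm
  have hdd : d = F.support.sup fun i => i + (F.coeff i).natDegree := hd
  have hnd : n ≤ d := by
    have hmem : F.natDegree ∈ F.support := by
      rw [Polynomial.mem_support_iff]
      intro h0
      exact one_ne_zero (hmonic.symm.trans h0)
    have h2 : F.natDegree + (F.coeff F.natDegree).natDegree ≤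
        F.support.sup fun i => i + (F.coeff i).natDegree :=
      Finset.le_sup (f := fun i => i + (F.coeff i).natDegree) hmem
    rw [← hdd] at h2
    omega
  have hd1 : 1 ≤ d := le_trans hn1 hnd
  have hcoeffd : ∀ i, (Fk.coeff i).natDegree ≤ d := by
    intro i
    have h1 : (F.coeff i).natDegree ≤ d := by
      by_cases hi : i ∈ F.support
      · have h2 : i + (F.coeff i).natDegree ≤
            F.support.sup fun i => i + (F.coeff i).natDegree :=
          Finset.le_sup (f := fun i => i + (F.coeff i).natDegree) hi
        rw [← hdd] at h2
        omega
      · simp [Polynomial.notMem_support_iff.1 hi]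
    calc (Fk.coeff i).natDegree = ((F.coeff i).map ι).natDegree := by
          rw [hFk, Polynomial.coeff_map]; rfl
      _ ≤ (F.coeff i).natDegree := Polynomial.natDegree_map_le
      _ ≤ d := h1
  have hdercoeff : ∀ i, ((Fk.derivative).coeff i).natDegree ≤ d := by
    intro i
    rw [Polynomial.coeff_derivative]
    refine le_trans Polynomial.natDegree_mul_le ?_
    have hc : ((i : Polynomial K) + 1) = ((i + 1 : ℕ) : Polynomial K) := by push_cast; ring
    rw [hc, Polynomial.natDegree_natCast]
    simpa using hcoeffd (i+1)
  -- the key vanishing of the derivative at integral points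
  have key : ∀ x₁ x₂ : K, eval₂ (evalRingHom x₁) x₂ Fk = 0 →
      eval₂ (evalRingHom x₁) x₂ (Fk.derivative) = 0 := by
    intro x₁ x₂ hv
    refine deriv_vanish Fk hFkmonic hn1 hirr ?_ x₁ x₂ hv
    intro habs
    refine hnotabs ?_
    have hcomp : F.map (Polynomial.mapRingHom (algebraMap (𝓞 K) (AlgebraicClosure K)))
        = Fk.map (Polynomial.mapRingHom (algebraMap K (AlgebraicClosure K))) := by
      rw [hFk, Polynomial.map_map, Polynomial.mapRingHom_comp,
        ← IsScalarTower.algebraMap_eq (𝓞 K) K (AlgebraicClosure K)]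
    rw [hcomp]
    exact habs
  -- Sylvester determinant
  set m : ℕ := n - 1 with hm
  set Dp : Polynomial K := (syl Fk (Fk.derivative) m n).det with hDp
  set L := RatFunc K with hL
  haveI : CharZero L := charZero_of_injective_algebraMap (algebraMap K L).injective
  set aL : Polynomial K →+* L := algebraMap (Polynomial K) L with haL
  have hFLmonic : (Fk.map aL).Monic := hFkmonic.map _
  have hFLirr : Irreducible (Fk.map aL) :=
    (hFkmonic.irreducible_iff_irreducible_map_fraction_map).1 hirr
  have hsep : (Fk.map aL).Separable := hFLirr.separable
  have hcop : IsCoprime (Fk.map aL) ((Fk.map aL).derivative) := hsep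
  have hgdegK : (Fk.derivative).natDegree ≤ m := by
    rw [hm]; exact Polynomial.natDegree_derivative_le Fk
  have hder : derivative (Fk.map aL) = (Fk.derivative).map aL :=
    Polynomial.derivative_map Fk aL
  have hcop2 : IsCoprime (Fk.map aL) ((Fk.derivative).map aL) := hder ▸ hcop
  have hmap_syl : (syl Fk (Fk.derivative) m n).map aL
      = syl (Fk.map aL) ((Fk.derivative).map aL) m n := by
    funext i jj
    simp only [Matrix.map_apply, syl]
    split_ifs <;> simp [Polynomial.coeff_map]
  have hdetL : aL Dp = (syl (Fk.map aL) ((Fk.derivative).map aL) m n).det := by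
    rw [hDp, RingHom.map_det]
    exact congrArg Matrix.det hmap_syl
  have hDpne : Dp ≠ 0 := by
    intro h0
    refine syl_det_ne_zero (Fk.map aL) ((Fk.derivative).map aL) m n
      (hFkmonic.natDegree_map _) ?_ (by omega) hcop2 ?_
    · exact le_trans Polynomial.natDegree_map_le hgdegK
    · rw [← hdetL, h0, map_zero]
  have hDdeg : Dp.natDegree ≤ (m + n) * d := by
    refine natDegree_det_le _ ?_
    intro i jj
    simp only [syl]
    split_ifs
    · exact hcoeffd _
    · simp
    · exact hdercoeff _
    · simp
  obtain ⟨a, b, hab⟩ := syl_det_bezout Fk (Fk.derivative) m n le_rfl hgdegK (by omega)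
  have hvanish : ∀ x₁ x₂ : K, eval₂ (evalRingHom x₁) x₂ Fk = 0 → Dp.eval x₁ = 0 := by
    intro x₁ x₂ hv
    have hd2 := key x₁ x₂ hv
    have h3 := congrArg (Polynomial.eval₂RingHom (evalRingHom x₁) x₂) hab
    simp only [map_add, map_mul] at h3
    rw [Polynomial.coe_eval₂RingHom] at h3
    rw [hv, hd2, mul_zero, mul_zero, add_zero] at h3
    rw [Polynomial.eval₂_C] at h3
    exact h3.symm
  -- the finite superset
  set T : Finset (K × K) := Dp.roots.toFinset.biUnion
    (fun q => ((Fk.map (evalRingHom q)).roots.toFinset).image (fun b => (q, b))) with hT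
  have hTcard : T.card ≤ 4 * d ^ 4 := by
    refine le_trans Finset.card_biUnion_le ?_
    have hper : ∀ q ∈ Dp.roots.toFinset,
        (((Fk.map (evalRingHom q)).roots.toFinset).image (fun b => (q, b))).card ≤ d := by
      intro q _
      refine le_trans Finset.card_image_le (le_trans (Multiset.toFinset_card_le _)
        (le_trans (Polynomial.card_roots' _) ?_))
      rw [hFkmonic.natDegree_map]
      exact hnd
    have hcard1 : Dp.roots.toFinset.card ≤ (m + n) * d :=
      le_trans (Multiset.toFinset_card_le _) (le_trans (Polynomial.card_roots' _) hDdeg)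
    calc ∑ q ∈ Dp.roots.toFinset,
          (((Fk.map (evalRingHom q)).roots.toFinset).image (fun b => (q, b))).card
        ≤ ∑ _q ∈ Dp.roots.toFinset, d := Finset.sum_le_sum hper
      _ = Dp.roots.toFinset.card * d := by rw [Finset.sum_const, smul_eq_mul]
      _ ≤ ((m + n) * d) * d := Nat.mul_le_mul_right d hcard1
      _ ≤ (2 * d * d) * d := by
          have : m + n ≤ 2 * d := by omega
          exact Nat.mul_le_mul_right d (Nat.mul_le_mul_right d this)
      _ ≤ 4 * d ^ 4 := by
          have h1 : (2*d*d)*d = 2 * d^3 := by ring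
          have h2 : d^3 ≤ d^4 := Nat.pow_le_pow_right (by omega) (by omega)
          omega
  set e : 𝓞 K × 𝓞 K → K × K := fun p => (ι p.1, ι p.2) with he
  have heinj : Function.Injective e := by
    intro p q h
    have h1 := congrArg Prod.fst h
    have h2 := congrArg Prod.snd h
    exact Prod.ext (hιinj h1) (hιinj h2)
  have hsub : e '' {x : 𝓞 K × 𝓞 K | evalTwo F x.1 x.2 = 0} ⊆ (T : Set (K × K)) := by
    rintro _ ⟨x, hx, rfl⟩
    have hx0 : eval₂ (evalRingHom x.1) x.2 F = 0 := hx
    have hvK : eval₂ (evalRingHom (ι x.1)) (ι x.2) Fk = 0 := by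
      rw [hFk, evalTwo_map' ι F x.1 x.2, hx0, map_zero]
    have hD : Dp.eval (ι x.1) = 0 := hvanish _ _ hvK
    have hpqne : (Fk.map (evalRingHom (ι x.1))) ≠ 0 := (hFkmonic.map _).ne_zero
    have hx2root : (Fk.map (evalRingHom (ι x.1))).eval (ι x.2) = 0 := by
      rw [Polynomial.eval_map]
      exact hvK
    refine Finset.mem_coe.2 (Finset.mem_biUnion.2 ⟨ι x.1, ?_, ?_⟩)
    · exact Multiset.mem_toFinset.2 (Polynomial.mem_roots'.2 ⟨hDpne, hD⟩)
    · exact Finset.mem_image.2 ⟨ι x.2,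
        Multiset.mem_toFinset.2 (Polynomial.mem_roots'.2 ⟨hpqne, hx2root⟩), rfl⟩
  have hfin : {x : 𝓞 K × 𝓞 K | evalTwo F x.1 x.2 = 0}.Finite := by
    have himg : (e '' {x : 𝓞 K × 𝓞 K | evalTwo F x.1 x.2 = 0}).Finite :=
      Set.Finite.subset T.finite_toSet hsub
    exact Set.Finite.of_finite_image himg heinj.injOn
  refine ⟨hfin, ?_⟩
  calc {x : 𝓞 K × 𝓞 K | evalTwo F x.1 x.2 = 0}.ncard
      = (e '' {x : 𝓞 K × 𝓞 K | evalTwo F x.1 x.2 = 0}).ncard :=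
        (Set.ncard_image_of_injective _ heinj).symm
    _ ≤ (T : Set (K × K)).ncard := Set.ncard_le_ncard hsub T.finite_toSet
    _ = T.card := Set.ncard_coe_finset T
    _ ≤ 4 * d ^ 4 := hTcard
end
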